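/- arXiv:2308.14929 — 3 statements merged into one kernel-verified Lean document; each statement's English description precedes it below -/
import Mathlib

section
/- Let A ∈ ℝ^{m×n} with SVD A = Ũ Σ Ṽᵀ, r = min(m,n), let μ be a probability measure on ℝ^n with ∫‖x‖² dμ(x) < ∞, and let p₁,…,p_r > 0 with ∑_b p_b = 1. Define F(U,V) = ∫ ∑_{b=1}^r p_b ‖U_{:b}V_{:b}ᵀ x − A x‖² dμ(x) and G(U',V') = ∫ ∑_{b=1}^r p_b ‖(U'_{:b}(V'_{:b})ᵀ − Σ) Ṽᵀ x‖² dμ(x) for U, U' ∈ ℝ^{m×r} and V, V' ∈ ℝ^{n×r}. Then F(U,V) = G(ŨᵀU, ṼᵀV) for all (U,V); consequently inf_{U,V} F(U,V) = inf_{U',V'} G(U',V'), and (U,V) is a global minimizer of F if and only if (ŨᵀU, ṼᵀV) is a global minimizer of G. -/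
/-! With `U' = ŨᵀU` and `V' = ṼᵀV` one has `(U'_{:b}V'_{:b}ᵀ − Σ) Ṽᵀ = Ũᵀ (U_{:b}V_{:b}ᵀ − A)`,
because truncating to the first `b` columns commutes with multiplying `U` and `V` on the
left. As `Ũᵀ` preserves Euclidean norms, `F = G ∘ φ` pointwise for the bijection
`φ (U, V) = (ŨᵀU, ṼᵀV)`, so the infima and the global minimizers correspond. -/

open Matrix MeasureTheory

noncomputable section

/-- Squared Euclidean norm of a vector in `ℝ^m`. -/
def sqNorm {m : ℕ} (v : Fin m → ℝ) : ℝ := ∑ i, v i ^ 2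

/-- `lrProd b U V = U_{:b} V_{:b}ᵀ`, the product of the submatrices consisting of the
first `b` columns of `U` and of `V`. -/
def lrProd {m n r : ℕ} (b : ℕ) (U : Matrix (Fin m) (Fin r) ℝ)
    (V : Matrix (Fin n) (Fin r) ℝ) : Matrix (Fin m) (Fin n) ℝ :=
  Matrix.of fun i j => ∑ t : Fin r, if (t : ℕ) < b then U i t * V j t else 0

/-- `F(U,V) = ∫ ∑_{b=1}^r p_b ‖U_{:b}V_{:b}ᵀ x − A x‖² dμ(x)`.
(The index `b : Fin r` stands for the 1-indexed truncation level `b+1 ∈ {1,…,r}`.) -/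
def maestroObj {m n r : ℕ} (A : Matrix (Fin m) (Fin n) ℝ)
    (μ : Measure (Fin n → ℝ)) (p : Fin r → ℝ)
    (U : Matrix (Fin m) (Fin r) ℝ) (V : Matrix (Fin n) (Fin r) ℝ) : ℝ :=
  ∫ x, ∑ b : Fin r,
    p b * sqNorm ((lrProd ((b : ℕ) + 1) U V).mulVec x - A.mulVec x) ∂μ

/-- `G(U',V') = ∫ ∑_{b=1}^r p_b ‖(U'_{:b}(V'_{:b})ᵀ − Σ) Ṽᵀ x‖² dμ(x)`. -/
def transObj {m n r : ℕ} (S : Matrix (Fin m) (Fin n) ℝ)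
    (Vt : Matrix (Fin n) (Fin n) ℝ) (μ : Measure (Fin n → ℝ)) (p : Fin r → ℝ)
    (U' : Matrix (Fin m) (Fin r) ℝ) (V' : Matrix (Fin n) (Fin r) ℝ) : ℝ :=
  ∫ x, ∑ b : Fin r,
    p b * sqNorm ((lrProd ((b : ℕ) + 1) U' V' - S).mulVec (Vtᵀ.mulVec x)) ∂μ

lemma sqNorm_eq_dotProduct {m : ℕ} (v : Fin m → ℝ) : sqNorm v = v ⬝ᵥ v := by
  simp [sqNorm, dotProduct, sq]

lemma sqNorm_transpose_mulVec {m : ℕ} {Q : Matrix (Fin m) (Fin m) ℝ} (hQ : Q * Qᵀ = 1)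
    (y : Fin m → ℝ) : sqNorm (Qᵀ *ᵥ y) = sqNorm y := by
  rw [sqNorm_eq_dotProduct, sqNorm_eq_dotProduct, dotProduct_mulVec, mulVec_transpose,
    vecMul_vecMul, hQ, vecMul_one]

lemma lrProd_eq_mul_diagonal_mul_transpose {m n r : ℕ} (b : ℕ) (U : Matrix (Fin m) (Fin r) ℝ)
    (V : Matrix (Fin n) (Fin r) ℝ) :
    lrProd b U V =
      U * diagonal (fun t : Fin r => if (t : ℕ) < b then (1 : ℝ) else 0) * Vᵀ := by
  ext i j
  simp only [lrProd, of_apply, mul_apply, diagonal, transpose_apply]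
  refine Finset.sum_congr rfl fun t _ => ?_
  simp only [mul_ite, mul_one, mul_zero, Finset.sum_ite_eq', Finset.mem_univ, if_true]
  split <;> simp

lemma lrProd_mul_mul {m n r m' n' : ℕ} (b : ℕ) (X : Matrix (Fin m') (Fin m) ℝ)
    (Y : Matrix (Fin n') (Fin n) ℝ) (U : Matrix (Fin m) (Fin r) ℝ)
    (V : Matrix (Fin n) (Fin r) ℝ) :
    lrProd b (X * U) (Y * V) = X * lrProd b U V * Yᵀ := by
  simp only [lrProd_eq_mul_diagonal_mul_transpose, transpose_mul, Matrix.mul_assoc]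

lemma surjective_mul_left_of_mul_eq_one {k l R : Type*} [Fintype k] [DecidableEq k] [Semiring R]
    {P Q : Matrix k k R} (h : P * Q = 1) :
    Function.Surjective fun U : Matrix k l R => P * U :=
  fun U => ⟨Q * U, show P * (Q * U) = U by rw [← Matrix.mul_assoc, h, Matrix.one_mul]⟩

lemma maestroObj_eq_transObj {m n r : ℕ} {A : Matrix (Fin m) (Fin n) ℝ}
    {Ut : Matrix (Fin m) (Fin m) ℝ} {S : Matrix (Fin m) (Fin n) ℝ}
    {Vt : Matrix (Fin n) (Fin n) ℝ}
    (hUorth : Utᵀ * Ut = 1) (hUorth' : Ut * Utᵀ = 1) (hVorth' : Vt * Vtᵀ = 1)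
    (hA : A = Ut * S * Vtᵀ) (μ : Measure (Fin n → ℝ)) (p : Fin r → ℝ)
    (U : Matrix (Fin m) (Fin r) ℝ) (V : Matrix (Fin n) (Fin r) ℝ) :
    maestroObj A μ p U V = transObj S Vt μ p (Utᵀ * U) (Vtᵀ * V) := by
  have residual : ∀ b : ℕ,
      (lrProd b (Utᵀ * U) (Vtᵀ * V) - S) * Vtᵀ = Utᵀ * (lrProd b U V - A) := by
    intro b
    rw [lrProd_mul_mul, transpose_transpose, Matrix.sub_mul, Matrix.mul_sub, hA,
      Matrix.mul_assoc, Matrix.mul_assoc, hVorth', Matrix.mul_one, ← Matrix.mul_assoc,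
      ← Matrix.mul_assoc, hUorth, Matrix.one_mul]
  refine integral_congr_ae <| Filter.Eventually.of_forall fun x =>
    Finset.sum_congr rfl fun b _ => ?_
  rw [mulVec_mulVec, residual, ← mulVec_mulVec, sqNorm_transpose_mulVec hUorth', sub_mulVec]

theorem stmt1_general {m n : ℕ} (A : Matrix (Fin m) (Fin n) ℝ)
    (Ut : Matrix (Fin m) (Fin m) ℝ) (S : Matrix (Fin m) (Fin n) ℝ)
    (Vt : Matrix (Fin n) (Fin n) ℝ)
    (hUorth : Utᵀ * Ut = 1) (hUorth' : Ut * Utᵀ = 1)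
    (hVorth : Vtᵀ * Vt = 1) (hVorth' : Vt * Vtᵀ = 1)
    (hA : A = Ut * S * Vtᵀ)
    (μ : Measure (Fin n → ℝ))
    (p : Fin (min m n) → ℝ) :
    (∀ (U : Matrix (Fin m) (Fin (min m n)) ℝ) (V : Matrix (Fin n) (Fin (min m n)) ℝ),
      maestroObj A μ p U V = transObj S Vt μ p (Utᵀ * U) (Vtᵀ * V)) ∧
    ((⨅ UV : Matrix (Fin m) (Fin (min m n)) ℝ × Matrix (Fin n) (Fin (min m n)) ℝ,
        maestroObj A μ p UV.1 UV.2) =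
      ⨅ UV : Matrix (Fin m) (Fin (min m n)) ℝ × Matrix (Fin n) (Fin (min m n)) ℝ,
        transObj S Vt μ p UV.1 UV.2) ∧
    (∀ (U : Matrix (Fin m) (Fin (min m n)) ℝ) (V : Matrix (Fin n) (Fin (min m n)) ℝ),
      (∀ (U' : Matrix (Fin m) (Fin (min m n)) ℝ) (V' : Matrix (Fin n) (Fin (min m n)) ℝ),
          maestroObj A μ p U V ≤ maestroObj A μ p U' V') ↔
      (∀ (U' : Matrix (Fin m) (Fin (min m n)) ℝ) (V' : Matrix (Fin n) (Fin (min m n)) ℝ),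
          transObj S Vt μ p (Utᵀ * U) (Vtᵀ * V) ≤ transObj S Vt μ p U' V')) := by
  have hF := maestroObj_eq_transObj hUorth hUorth' hVorth' hA μ p
  have hU := surjective_mul_left_of_mul_eq_one (l := Fin (min m n)) hUorth
  have hV := surjective_mul_left_of_mul_eq_one (l := Fin (min m n)) hVorth
  refine ⟨hF, ?_, fun U V => ?_⟩
  · simp only [iInf, hF]
    exact congrArg sInf ((hU.prodMap hV).range_comp fun UV => transObj S Vt μ p UV.1 UV.2)
  · simp only [hF]
    refine ⟨fun h U' V' => ?_, fun h U' V' => h _ _⟩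
    obtain ⟨U₀, rfl⟩ := hU U'
    obtain ⟨V₀, rfl⟩ := hV V'
    exact h U₀ V₀

/-- With `A = Ũ Σ Ṽᵀ` an SVD, `r = min m n`, `μ` a probability measure with
finite second moment, and positive weights summing to one:
`F(U,V) = G(ŨᵀU, ṼᵀV)` for all `(U,V)`; hence `inf F = inf G`; and `(U,V)` is a
global minimizer of `F` iff `(ŨᵀU, ṼᵀV)` is a global minimizer of `G`. -/
theorem stmt1 {m n : ℕ} (A : Matrix (Fin m) (Fin n) ℝ)
    (Ut : Matrix (Fin m) (Fin m) ℝ) (S : Matrix (Fin m) (Fin n) ℝ)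
    (Vt : Matrix (Fin n) (Fin n) ℝ)
    (hUorth : Utᵀ * Ut = 1) (hUorth' : Ut * Utᵀ = 1)
    (hVorth : Vtᵀ * Vt = 1) (hVorth' : Vt * Vtᵀ = 1)
    (hSdiag : ∀ (i : Fin m) (j : Fin n), (i : ℕ) ≠ (j : ℕ) → S i j = 0)
    (hSnonneg : ∀ (i : Fin m) (j : Fin n), (i : ℕ) = (j : ℕ) → 0 ≤ S i j)
    (hSmono : ∀ (i i' : Fin m) (j j' : Fin n), (i : ℕ) = (j : ℕ) → (i' : ℕ) = (j' : ℕ) →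
      (i : ℕ) ≤ (i' : ℕ) → S i' j' ≤ S i j)
    (hA : A = Ut * S * Vtᵀ)
    (μ : Measure (Fin n → ℝ)) [IsProbabilityMeasure μ]
    (hmoment : Integrable (fun x => ∑ i, x i ^ 2) μ)
    (p : Fin (min m n) → ℝ) (hp : ∀ b, 0 < p b) (hpsum : ∑ b, p b = 1) :
    (∀ (U : Matrix (Fin m) (Fin (min m n)) ℝ) (V : Matrix (Fin n) (Fin (min m n)) ℝ),
      maestroObj A μ p U V = transObj S Vt μ p (Utᵀ * U) (Vtᵀ * V)) ∧
    ((⨅ UV : Matrix (Fin m) (Fin (min m n)) ℝ × Matrix (Fin n) (Fin (min m n)) ℝ,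
        maestroObj A μ p UV.1 UV.2) =
      ⨅ UV : Matrix (Fin m) (Fin (min m n)) ℝ × Matrix (Fin n) (Fin (min m n)) ℝ,
        transObj S Vt μ p UV.1 UV.2) ∧
    (∀ (U : Matrix (Fin m) (Fin (min m n)) ℝ) (V : Matrix (Fin n) (Fin (min m n)) ℝ),
      (∀ (U' : Matrix (Fin m) (Fin (min m n)) ℝ) (V' : Matrix (Fin n) (Fin (min m n)) ℝ),
          maestroObj A μ p U V ≤ maestroObj A μ p U' V') ↔
      (∀ (U' : Matrix (Fin m) (Fin (min m n)) ℝ) (V' : Matrix (Fin n) (Fin (min m n)) ℝ),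
          transObj S Vt μ p (Utᵀ * U) (Vtᵀ * V) ≤ transObj S Vt μ p U' V')) :=
  stmt1_general A Ut S Vt hUorth hUorth' hVorth hVorth' hA μ p

end
end

section
/- Let A ∈ ℝ^{m×n} with SVD A = Ũ Σ Ṽᵀ, r = min(m,n), let μ be a probability measure on ℝ^n with ∫‖x‖² dμ(x) < ∞, and let p₁,…,p_r > 0 with ∑_b p_b = 1. Then the two minimization problems have the same optimal value: inf over U ∈ ℝ^{m×r}, V ∈ ℝ^{n×r} of ∫ ∑_{b=1}^r p_b ‖U_{:b}V_{:b}ᵀ x − A x‖² dμ(x) equals inf over U ∈ ℝ^{m×r}, V ∈ ℝ^{m×r} of ∫ ∑_{b=1}^r p_b ‖(U_{:b}V_{:b}ᵀ − I_m) Σ Ṽᵀ x‖² dμ(x), where I_m is the m×m identity matrix. -/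
open Matrix MeasureTheory

noncomputable section

/-- `H(U,V) = ∫ ∑_{b=1}^r p_b ‖(U_{:b}V_{:b}ᵀ − I_m) Σ Ṽᵀ x‖² dμ(x)`,
where `U, V ∈ ℝ^{m×r}`. -/
def projObj {m n r : ℕ} (S : Matrix (Fin m) (Fin n) ℝ)
    (Vt : Matrix (Fin n) (Fin n) ℝ) (μ : Measure (Fin n → ℝ)) (p : Fin r → ℝ)
    (U : Matrix (Fin m) (Fin r) ℝ) (V : Matrix (Fin m) (Fin r) ℝ) : ℝ :=
  ∫ x, ∑ b : Fin r,
    p b * sqNorm (((lrProd ((b : ℕ) + 1) U V - 1) * S).mulVec (Vtᵀ.mulVec x)) ∂μ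

section Aux

variable {m' n : ℕ} {μ : Measure (Fin n → ℝ)}


variable {m' n : ℕ} {μ : Measure (Fin n → ℝ)}

/-- second moment matrix -/
def Cmu (μ : Measure (Fin n → ℝ)) : Matrix (Fin n) (Fin n) ℝ :=
  Matrix.of fun j k => ∫ x, x j * x k ∂μ

lemma integrable_coord_mul (hmom : Integrable (fun x => ∑ i, x i ^ 2) μ) (j k : Fin n) :
    Integrable (fun x => x j * x k) μ := by
  refine Integrable.mono' hmom
    (((measurable_pi_apply j).mul (measurable_pi_apply k)).aestronglyMeasurable) ?_
  filter_upwards with x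
  have h1 : x j ^ 2 ≤ ∑ i, x i ^ 2 :=
    Finset.single_le_sum (f := fun i => x i ^ 2) (fun i _ => sq_nonneg _) (Finset.mem_univ j)
  have h2 : x k ^ 2 ≤ ∑ i, x i ^ 2 :=
    Finset.single_le_sum (f := fun i => x i ^ 2) (fun i _ => sq_nonneg _) (Finset.mem_univ k)
  rw [Real.norm_eq_abs]
  rcases abs_cases (x j * x k) with ⟨h, _⟩ | ⟨h, _⟩ <;> rw [h] <;>
    nlinarith [sq_nonneg (x j - x k), sq_nonneg (x j + x k)]

lemma sqNorm_mulVec_expand (N : Matrix (Fin m') (Fin n) ℝ) (x : Fin n → ℝ) :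
    sqNorm (N.mulVec x) = ∑ i, ∑ j, ∑ k, N i j * N i k * (x j * x k) := by
  unfold sqNorm
  refine Finset.sum_congr rfl fun i _ => ?_
  rw [mulVec, dotProduct, sq, Finset.sum_mul_sum]
  refine Finset.sum_congr rfl fun j _ => Finset.sum_congr rfl fun k _ => by ring

lemma integrable_sqNorm_mulVec (hmom : Integrable (fun x => ∑ i, x i ^ 2) μ)
    (N : Matrix (Fin m') (Fin n) ℝ) :
    Integrable (fun x => sqNorm (N.mulVec x)) μ := by
  have : (fun x => sqNorm (N.mulVec x))
      = fun x => ∑ i, ∑ j, ∑ k, N i j * N i k * (x j * x k) := by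
    funext x; exact sqNorm_mulVec_expand N x
  rw [this]
  refine integrable_finset_sum _ fun i _ => integrable_finset_sum _ fun j _ =>
    integrable_finset_sum _ fun k _ => ((integrable_coord_mul hmom j k).const_mul _)

lemma integral_sqNorm_mulVec (hmom : Integrable (fun x => ∑ i, x i ^ 2) μ)
    (N : Matrix (Fin m') (Fin n) ℝ) :
    ∫ x, sqNorm (N.mulVec x) ∂μ = Matrix.trace (Nᵀ * N * Cmu μ) := by
  have h1 : ∫ x, sqNorm (N.mulVec x) ∂μ
      = ∑ i, ∑ j, ∑ k, N i j * N i k * ∫ x, x j * x k ∂μ := by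
    simp_rw [sqNorm_mulVec_expand N]
    rw [integral_finset_sum _ fun i _ => integrable_finset_sum _ fun j _ =>
      integrable_finset_sum _ fun k _ => ((integrable_coord_mul hmom j k).const_mul _)]
    refine Finset.sum_congr rfl fun i _ => ?_
    rw [integral_finset_sum _ fun j _ =>
      integrable_finset_sum _ fun k _ => ((integrable_coord_mul hmom j k).const_mul _)]
    refine Finset.sum_congr rfl fun j _ => ?_
    rw [integral_finset_sum _ fun k _ => ((integrable_coord_mul hmom j k).const_mul _)]
    exact Finset.sum_congr rfl fun k _ => integral_const_mul _ _
  rw [h1]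
  have hsym : ∀ (j k : Fin n), (∫ x, x k * x j ∂μ) = ∫ x, x j * x k ∂μ := by
    intro j k; simp_rw [mul_comm]
  simp only [Matrix.trace, Matrix.diag_apply, Matrix.mul_apply, Matrix.transpose_apply, Cmu,
    Matrix.of_apply]
  rw [Finset.sum_comm]
  refine Finset.sum_congr rfl fun j _ => ?_
  rw [Finset.sum_comm]
  refine Finset.sum_congr rfl fun k _ => ?_
  rw [hsym j k, Finset.sum_mul]
  

lemma posSemidef_Cmu (hmom : Integrable (fun x => ∑ i, x i ^ 2) μ) :
    (Cmu μ).PosSemidef := by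
  have hsym : ∀ (j k : Fin n), (∫ x, x k * x j ∂μ) = ∫ x, x j * x k ∂μ := by
    intro j k; simp_rw [mul_comm]
  refine Matrix.PosSemidef.of_dotProduct_mulVec_nonneg ?_ ?_
  · ext j k
    simp only [Matrix.conjTranspose_apply, Cmu, Matrix.of_apply, star_trivial]
    exact hsym j k
  · intro v
    have hstar : star v = v := by simp [star_trivial]
    rw [hstar]
    have key : dotProduct v ((Cmu μ) *ᵥ v) = ∫ x, (∑ j, v j * x j) ^ 2 ∂μ := by
      have hexp : ∀ x : Fin n → ℝ, (∑ j, v j * x j) ^ 2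
          = ∑ j, ∑ k, v j * v k * (x j * x k) := by
        intro x
        rw [sq, Finset.sum_mul_sum]
        exact Finset.sum_congr rfl fun j _ => Finset.sum_congr rfl fun k _ => by ring
      simp_rw [hexp]
      rw [integral_finset_sum _ fun j _ => integrable_finset_sum _ fun k _ =>
        ((integrable_coord_mul hmom j k).const_mul _)]
      simp_rw [integral_finset_sum _ fun k _ => ((integrable_coord_mul hmom _ k).const_mul _),
        integral_const_mul]
      simp only [dotProduct, Matrix.mulVec, Cmu, Matrix.of_apply]
      refine Finset.sum_congr rfl fun j _ => ?_
      rw [Finset.mul_sum]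
      exact Finset.sum_congr rfl fun k _ => by ring
    rw [key]
    exact integral_nonneg fun x => sq_nonneg _

lemma transpose_eq_conjTranspose_real {a b : ℕ} (M : Matrix (Fin a) (Fin b) ℝ) : Mᴴ = Mᵀ := by
  ext i j; simp [Matrix.conjTranspose_apply]

lemma trace_conj_orth {m'' : ℕ} (O : Matrix (Fin m'') (Fin m'') ℝ) (hO : Oᵀ*O = 1)
    (N : Matrix (Fin m'') (Fin n) ℝ) (C : Matrix (Fin n) (Fin n) ℝ) :
    Matrix.trace ((O*N)ᵀ*(O*N)*C) = Matrix.trace (Nᵀ*N*C) := by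
  have h : (O*N)ᵀ*(O*N) = Nᵀ*N := by
    rw [Matrix.transpose_mul, Matrix.mul_assoc, ← Matrix.mul_assoc Oᵀ, hO, Matrix.one_mul]
  rw [h]

lemma trace_shift {mm : ℕ} (M : Matrix (Fin mm) (Fin n) ℝ) (Vt : Matrix (Fin n) (Fin n) ℝ)
    (C : Matrix (Fin n) (Fin n) ℝ) :
    Matrix.trace ((M*Vtᵀ)ᵀ*(M*Vtᵀ)*C) = Matrix.trace (Mᵀ*M*(Vtᵀ*C*Vt)) := by
  have h : (M*Vtᵀ)ᵀ*(M*Vtᵀ)*C = Vt*(Mᵀ*(M*(Vtᵀ*C))) := by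
    rw [Matrix.transpose_mul, Matrix.transpose_transpose]
    simp only [Matrix.mul_assoc]
  rw [h, Matrix.trace_mul_comm]
  simp only [Matrix.mul_assoc]

lemma trace_to_rows {mm : ℕ} (M : Matrix (Fin mm) (Fin n) ℝ) (R : Matrix (Fin n) (Fin n) ℝ)
    (hR : Rᵀ = R) :
    Matrix.trace (Mᵀ*M*(R*R)) = ∑ i, sqNorm (R.mulVec fun j => M i j) := by
  have hRe : ∀ a b, R a b = R b a := fun a b => by
    conv_lhs => rw [← hR]
    exact Matrix.transpose_apply R a b
  have h1 : Matrix.trace ((M*R)ᵀ*(M*R)) = Matrix.trace (Mᵀ*M*(R*R)) := by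
    rw [Matrix.transpose_mul, Matrix.mul_assoc (Rᵀ) _ _, Matrix.trace_mul_comm, hR]
    simp only [Matrix.mul_assoc]
  rw [← h1]
  simp only [Matrix.trace, Matrix.diag_apply, Matrix.mul_apply, Matrix.transpose_apply,
    sqNorm, Matrix.mulVec, dotProduct]
  rw [Finset.sum_comm]
  refine Finset.sum_congr rfl fun i _ => Finset.sum_congr rfl fun t _ => ?_
  have h2 : ∑ j, R t j * M i j = ∑ j, M i j * R j t := by
    refine Finset.sum_congr rfl fun j _ => ?_
    rw [hRe t j]; ring
  rw [sq, h2]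

lemma lrProd_mul {m n r m2 n2 : ℕ} (b : ℕ) (M : Matrix (Fin m2) (Fin m) ℝ)
    (N : Matrix (Fin n2) (Fin n) ℝ) (U : Matrix (Fin m) (Fin r) ℝ)
    (V : Matrix (Fin n) (Fin r) ℝ) :
    lrProd b (M*U) (N*V) = M * lrProd b U V * Nᵀ := by
  ext i j
  simp only [lrProd, Matrix.of_apply, Matrix.mul_apply, Matrix.transpose_apply]
  calc ∑ t : Fin r, (if (t:ℕ) < b then (∑ k, M i k * U k t) * (∑ l, N j l * V l t) else 0)
      = ∑ t : Fin r, ∑ k, ∑ l, (if (t:ℕ) < b then M i k * U k t * (N j l * V l t) else 0) := by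
        refine Finset.sum_congr rfl fun t _ => ?_
        split
        · rw [Finset.sum_mul_sum]
        · simp
    _ = ∑ k, ∑ l, ∑ t : Fin r, (if (t:ℕ) < b then M i k * U k t * (N j l * V l t) else 0) := by
        rw [Finset.sum_comm]
        exact Finset.sum_congr rfl fun k _ => Finset.sum_comm
    _ = ∑ l, (∑ k, M i k * ∑ t : Fin r, (if (t:ℕ) < b then U k t * V l t else 0)) * N j l := by
        rw [Finset.sum_comm]
        refine Finset.sum_congr rfl fun l _ => ?_
        rw [Finset.sum_mul]
        refine Finset.sum_congr rfl fun k _ => ?_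
        rw [Finset.mul_sum, Finset.sum_mul]
        refine Finset.sum_congr rfl fun t _ => ?_
        split <;> ring


lemma sqNorm_orth {mm : ℕ} (O : Matrix (Fin mm) (Fin mm) ℝ) (hO : Oᵀ*O = 1) (z : Fin mm → ℝ) :
    sqNorm (O.mulVec z) = sqNorm z := by
  have hdot : ∀ v : Fin mm → ℝ, sqNorm v = v ⬝ᵥ v := by
    intro v; simp [sqNorm, dotProduct, sq]
  calc sqNorm (O *ᵥ z) = (O *ᵥ z) ⬝ᵥ (O *ᵥ z) := hdot _
    _ = (z ᵥ* Oᵀ) ⬝ᵥ (O *ᵥ z) := by rw [Matrix.vecMul_transpose]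
    _ = z ⬝ᵥ (Oᵀ *ᵥ (O *ᵥ z)) := (Matrix.dotProduct_mulVec _ _ _).symm
    _ = z ⬝ᵥ z := by rw [Matrix.mulVec_mulVec, hO, Matrix.one_mulVec]
    _ = sqNorm z := (hdot _).symm

end Aux

section Proj

variable {m r n : ℕ}


variable {m r n : ℕ}

local notation "E" => EuclideanSpace ℝ (Fin n)

/-- key projection lemma -/
lemma key_proj (R : Matrix (Fin n) (Fin n) ℝ) (S : Matrix (Fin m) (Fin n) ℝ)
    (Jset : Set (Fin n)) (hS : ∀ i j, j ∉ Jset → S i j = 0)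
    (U₀ : Matrix (Fin m) (Fin r) ℝ) (V₀ : Matrix (Fin n) (Fin r) ℝ) :
    ∃ V'' : Matrix (Fin n) (Fin r) ℝ, (∀ j, j ∉ Jset → ∀ t, V'' j t = 0) ∧
      ∀ b : ℕ, (∑ i, sqNorm (R.mulVec fun j => (lrProd b U₀ V'' - S) i j))
        ≤ ∑ i, sqNorm (R.mulVec fun j => (lrProd b U₀ V₀ - S) i j) := by
  classical
  set e : (Fin n → ℝ) ≃ₗ[ℝ] E := (WithLp.linearEquiv 2 ℝ (Fin n → ℝ)).symm with he
  have he_apply : ∀ (v : Fin n → ℝ) (j : Fin n), (e v) j = v j := fun v j => rfl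
  have hes_apply : ∀ (z : E) (j : Fin n), (e.symm z) j = z j := fun z j => rfl
  have hsqNorm : ∀ v : Fin n → ℝ, sqNorm v = ‖e v‖ ^ 2 := by
    intro v
    rw [EuclideanSpace.norm_eq]
    rw [Real.sq_sqrt (by positivity)]
    exact Finset.sum_congr rfl fun i _ => by rw [he_apply]; rw [Real.norm_eq_abs, sq_abs]
  -- the linear map z ↦ R (z)
  set fL : E →ₗ[ℝ] E := e.toLinearMap ∘ₗ (Matrix.mulVecLin R) ∘ₗ e.symm.toLinearMap with hfL
  have hfL_apply : ∀ v : Fin n → ℝ, fL (e v) = e (R.mulVec v) := by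
    intro v; simp [hfL, Matrix.mulVecLin_apply]
  -- span of coordinates in Jset
  set g : Fin n → (Fin n → ℝ) := fun j => fun j' => if j = j' then (1:ℝ) else 0 with hg
  set K0 : Submodule ℝ E := Submodule.span ℝ ((fun j => e (g j)) '' Jset) with hK0
  have hmemK0 : ∀ v : Fin n → ℝ, (∀ j, j ∉ Jset → v j = 0) → e v ∈ K0 := by
    intro v hv
    have hv' : v = ∑ j, v j • g j := pi_eq_sum_univ v
    have hv2 : e v = ∑ j, v j • e (g j) := by
      conv_lhs => rw [hv']
      rw [map_sum]
      exact Finset.sum_congr rfl fun j _ => _root_.map_smul e _ _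
    rw [hv2]
    refine Submodule.sum_mem _ fun j _ => ?_
    by_cases hj : j ∈ Jset
    · exact Submodule.smul_mem _ _ (Submodule.subset_span ⟨j, hj, rfl⟩)
    · rw [hv j hj, zero_smul]; exact Submodule.zero_mem _
  have hsuppK0 : ∀ z : E, z ∈ K0 → ∀ j, j ∉ Jset → z j = 0 := by
    intro z hz
    induction hz using Submodule.span_induction with
    | mem x hx =>
      obtain ⟨j', hj', rfl⟩ := hx
      intro j hj
      show g j' j = 0
      rw [hg]
      exact if_neg (fun h : j' = j => hj (h ▸ hj'))
    | zero => intro j _; rfl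
    | add x y _ _ hx hy => intro j hj; show x j + y j = 0; rw [hx j hj, hy j hj, add_zero]
    | smul c x _ hx => intro j hj; show c * x j = 0; rw [hx j hj, mul_zero]
  set W : Submodule ℝ E := K0.map fL with hW
  -- the orthogonal projection onto W as a linear endomorphism
  set P : E →ₗ[ℝ] E := W.subtype ∘ₗ (Submodule.orthogonalProjectionOnto W).toLinearMap with hP
  have hP_apply : ∀ z : E, P z = (Submodule.orthogonalProjectionOnto W z : E) := fun z => rfl
  have hPfix : ∀ z : E, z ∈ W → P z = z := by
    intro z hz; rw [hP_apply]; exact W.starProjection_eq_self_iff.mpr hz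
  have hPnorm : ∀ z : E, ‖P z‖ ≤ ‖z‖ := by
    intro z
    rw [hP_apply]
    have h1 : ‖(Submodule.orthogonalProjectionOnto W z : E)‖ = ‖Submodule.orthogonalProjectionOnto W z‖ := rfl
    rw [h1]
    calc ‖Submodule.orthogonalProjectionOnto W z‖ ≤ ‖(Submodule.orthogonalProjectionOnto W : E →L[ℝ] W)‖ * ‖z‖ :=
          (Submodule.orthogonalProjectionOnto W).le_opNorm z
      _ ≤ 1 * ‖z‖ := by
          exact mul_le_mul_of_nonneg_right (Submodule.orthogonalProjectionOnto_norm_le W) (norm_nonneg z)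
      _ = ‖z‖ := one_mul ‖z‖
  -- choose the projected columns
  have hchoice : ∀ t : Fin r, ∃ a : Fin n → ℝ, (∀ j, j ∉ Jset → a j = 0) ∧
      fL (e a) = P (fL (e (fun j => V₀ j t))) := by
    intro t
    have hmem : P (fL (e (fun j => V₀ j t))) ∈ W := by
      rw [hP_apply]; exact (Submodule.orthogonalProjectionOnto W _).2
    obtain ⟨u, hu, hu2⟩ := Submodule.mem_map.mp hmem
    refine ⟨e.symm u, fun j hj => ?_, ?_⟩
    · rw [hes_apply]; exact hsuppK0 u hu j hj
    · rw [LinearEquiv.apply_symm_apply]; exact hu2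
  choose a ha hfa using hchoice
  refine ⟨Matrix.of fun j t => a t j, fun j hj t => ha t j hj, fun b => ?_⟩
  -- row identities
  have hrow : ∀ (V : Matrix (Fin n) (Fin r) ℝ) (i : Fin m),
      (fun j => (lrProd b U₀ V - S) i j)
        = (∑ t : Fin r, (if (t:ℕ) < b then U₀ i t else 0) • (fun j => V j t)) - fun j => S i j := by
    intro V i
    funext j
    simp only [Matrix.sub_apply, lrProd, Matrix.of_apply, Pi.sub_apply, Finset.sum_apply,
      Pi.smul_apply, smul_eq_mul]
    congr 1
    exact Finset.sum_congr rfl fun t _ => by split <;> simp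
  have hrownew : ∀ i : Fin m,
      e ((fun j => (lrProd b U₀ (Matrix.of fun j t => a t j) - S) i j) : Fin n → ℝ)
        = (∑ t : Fin r, (if (t:ℕ) < b then U₀ i t else 0) • e (a t)) - e (fun j => S i j) := by
    intro i
    rw [hrow]
    simp only [map_sub, map_sum, _root_.map_smul]
    rfl
  have hrowold : ∀ i : Fin m,
      e ((fun j => (lrProd b U₀ V₀ - S) i j) : Fin n → ℝ)
        = (∑ t : Fin r, (if (t:ℕ) < b then U₀ i t else 0) • e (fun j => V₀ j t))
            - e (fun j => S i j) := by
    intro i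
    rw [hrow]
    simp only [map_sub, map_sum, _root_.map_smul]
  -- key pointwise claim
  have hkey : ∀ i : Fin m,
      fL (e ((fun j => (lrProd b U₀ (Matrix.of fun j t => a t j) - S) i j) : Fin n → ℝ))
        = P (fL (e ((fun j => (lrProd b U₀ V₀ - S) i j) : Fin n → ℝ))) := by
    intro i
    have hSfix : P (fL (e (fun j => S i j))) = fL (e (fun j => S i j)) :=
      hPfix _ (Submodule.mem_map_of_mem (hmemK0 _ (fun j hj => hS i j hj)))
    rw [hrownew i, hrowold i]
    simp only [map_sub, map_sum, _root_.map_smul]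
    rw [hSfix]
    congr 1
    refine Finset.sum_congr rfl fun t _ => ?_
    simp only [_root_.map_smul, hfa]
  -- conclude
  refine Finset.sum_le_sum fun i _ => ?_
  have h1 : sqNorm (R.mulVec fun j => (lrProd b U₀ (Matrix.of fun j t => a t j) - S) i j)
      = ‖fL (e ((fun j => (lrProd b U₀ (Matrix.of fun j t => a t j) - S) i j) : Fin n → ℝ))‖^2 := by
    rw [hsqNorm, hfL_apply]
  have h2 : sqNorm (R.mulVec fun j => (lrProd b U₀ V₀ - S) i j)
      = ‖fL (e ((fun j => (lrProd b U₀ V₀ - S) i j) : Fin n → ℝ))‖^2 := by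
    rw [hsqNorm, hfL_apply]
  rw [h1, h2, hkey i]
  have := hPnorm (fL (e ((fun j => (lrProd b U₀ V₀ - S) i j) : Fin n → ℝ)))
  nlinarith [norm_nonneg (P (fL (e ((fun j => (lrProd b U₀ V₀ - S) i j) : Fin n → ℝ)))),
    norm_nonneg (fL (e ((fun j => (lrProd b U₀ V₀ - S) i j) : Fin n → ℝ)))]


end Proj

/-- With `A = Ũ Σ Ṽᵀ` an SVD, `r = min m n`, `μ` a probability measure with
finite second moment and positive weights summing to one, the two minimization problems
have the same optimal value:
`inf_{U∈ℝ^{m×r}, V∈ℝ^{n×r}} ∫ ∑_b p_b ‖U_{:b}V_{:b}ᵀ x − A x‖² dμ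
 = inf_{U,V∈ℝ^{m×r}} ∫ ∑_b p_b ‖(U_{:b}V_{:b}ᵀ − I_m) Σ Ṽᵀ x‖² dμ`. -/
theorem stmt2 {m n : ℕ} (A : Matrix (Fin m) (Fin n) ℝ)
    (Ut : Matrix (Fin m) (Fin m) ℝ) (S : Matrix (Fin m) (Fin n) ℝ)
    (Vt : Matrix (Fin n) (Fin n) ℝ)
    (hUorth : Utᵀ * Ut = 1) (hUorth' : Ut * Utᵀ = 1)
    (hVorth : Vtᵀ * Vt = 1) (hVorth' : Vt * Vtᵀ = 1)
    (hSdiag : ∀ (i : Fin m) (j : Fin n), (i : ℕ) ≠ (j : ℕ) → S i j = 0)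
    (hSnonneg : ∀ (i : Fin m) (j : Fin n), (i : ℕ) = (j : ℕ) → 0 ≤ S i j)
    (hSmono : ∀ (i i' : Fin m) (j j' : Fin n), (i : ℕ) = (j : ℕ) → (i' : ℕ) = (j' : ℕ) →
      (i : ℕ) ≤ (i' : ℕ) → S i' j' ≤ S i j)
    (hA : A = Ut * S * Vtᵀ)
    (μ : Measure (Fin n → ℝ)) [IsProbabilityMeasure μ]
    (hmoment : Integrable (fun x => ∑ i, x i ^ 2) μ)
    (p : Fin (min m n) → ℝ) (hp : ∀ b, 0 < p b) (hpsum : ∑ b, p b = 1) :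
    (⨅ UV : Matrix (Fin m) (Fin (min m n)) ℝ × Matrix (Fin n) (Fin (min m n)) ℝ,
        maestroObj A μ p UV.1 UV.2) =
      ⨅ UV : Matrix (Fin m) (Fin (min m n)) ℝ × Matrix (Fin m) (Fin (min m n)) ℝ,
        projObj S Vt μ p UV.1 UV.2 := by
  have hCy : (Vtᵀ * Cmu μ * Vt).PosSemidef := by
    have h := (posSemidef_Cmu hmoment).conjTranspose_mul_mul_same Vt
    rwa [transpose_eq_conjTranspose_real] at h
  open scoped MatrixOrder in
  obtain ⟨Ry, hRy2, hRyT⟩ : ∃ R : Matrix (Fin n) (Fin n) ℝ,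
      R * R = Vtᵀ * Cmu μ * Vt ∧ Rᵀ = R :=
    ⟨CFC.sqrt (Vtᵀ * Cmu μ * Vt), CFC.sqrt_mul_sqrt_self _ hCy.nonneg, by
      rw [← transpose_eq_conjTranspose_real]; exact (CFC.sqrt_nonneg _).posSemidef.isHermitian⟩
  set G : Matrix (Fin m) (Fin (min m n)) ℝ → Matrix (Fin n) (Fin (min m n)) ℝ → ℝ :=
    fun W Z => ∑ b : Fin (min m n),
      p b * ∑ i, sqNorm (Ry.mulVec fun j => (lrProd ((b : ℕ) + 1) W Z - S) i j) with hG
  -- conversion of integrals to the common form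
  have hobj : ∀ F : Fin (min m n) → Matrix (Fin m) (Fin n) ℝ,
      (∫ x, ∑ b, p b * sqNorm (((F b) * Vtᵀ).mulVec x) ∂μ)
        = ∑ b, p b * ∑ i, sqNorm (Ry.mulVec fun j => F b i j) := by
    intro F
    rw [integral_finset_sum _ fun b _ => ((integrable_sqNorm_mulVec hmoment _).const_mul _)]
    refine Finset.sum_congr rfl fun b _ => ?_
    rw [integral_const_mul, integral_sqNorm_mulVec hmoment, trace_shift, ← hRy2,
      trace_to_rows _ _ hRyT]
  have hMaestro : ∀ (U : Matrix (Fin m) (Fin (min m n)) ℝ)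
      (V : Matrix (Fin n) (Fin (min m n)) ℝ),
      maestroObj A μ p U V = G (Utᵀ*U) (Vtᵀ*V) := by
    intro U V
    have hlr : ∀ b : ℕ, lrProd b U V - A = Ut * ((lrProd b (Utᵀ*U) (Vtᵀ*V) - S) * Vtᵀ) := by
      intro b
      have h1 : lrProd b (Ut*(Utᵀ*U)) (Vt*(Vtᵀ*V)) = Ut * lrProd b (Utᵀ*U) (Vtᵀ*V) * Vtᵀ :=
        lrProd_mul b Ut Vt (Utᵀ*U) (Vtᵀ*V)
      rw [← Matrix.mul_assoc Ut Utᵀ U, hUorth', Matrix.one_mul,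
        ← Matrix.mul_assoc Vt Vtᵀ V, hVorth', Matrix.one_mul] at h1
      rw [h1, hA, Matrix.sub_mul, Matrix.mul_sub]
      simp only [Matrix.mul_assoc]
    have hpt : (fun x => ∑ b : Fin (min m n),
          p b * sqNorm ((lrProd ((b : ℕ) + 1) U V).mulVec x - A.mulVec x))
        = fun x => ∑ b : Fin (min m n),
          p b * sqNorm (((lrProd ((b : ℕ) + 1) (Utᵀ*U) (Vtᵀ*V) - S) * Vtᵀ).mulVec x) := by
      funext x
      refine Finset.sum_congr rfl fun b _ => ?_
      rw [← Matrix.sub_mulVec, hlr ((b : ℕ) + 1), ← Matrix.mulVec_mulVec,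
        sqNorm_orth Ut hUorth]
    unfold maestroObj
    rw [hpt]
    exact hobj fun b => lrProd ((b : ℕ) + 1) (Utᵀ*U) (Vtᵀ*V) - S
  have hProj : ∀ (U' V' : Matrix (Fin m) (Fin (min m n)) ℝ),
      projObj S Vt μ p U' V' = G U' (Sᵀ*V') := by
    intro U' V'
    have hlr' : ∀ b : ℕ, (lrProd b U' V' - 1) * S = lrProd b U' (Sᵀ*V') - S := by
      intro b
      have h1 : lrProd b ((1 : Matrix (Fin m) (Fin m) ℝ)*U') (Sᵀ*V')
          = 1 * lrProd b U' V' * Sᵀᵀ := lrProd_mul b 1 Sᵀ U' V'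
      rw [Matrix.one_mul, Matrix.one_mul, Matrix.transpose_transpose] at h1
      rw [Matrix.sub_mul, Matrix.one_mul, h1]
    have hpt : (fun x => ∑ b : Fin (min m n),
          p b * sqNorm (((lrProd ((b : ℕ) + 1) U' V' - 1) * S).mulVec (Vtᵀ.mulVec x)))
        = fun x => ∑ b : Fin (min m n),
          p b * sqNorm (((lrProd ((b : ℕ) + 1) U' (Sᵀ*V') - S) * Vtᵀ).mulVec x) := by
      funext x
      refine Finset.sum_congr rfl fun b _ => ?_
      rw [Matrix.mulVec_mulVec, hlr' ((b : ℕ) + 1)]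
    unfold projObj
    rw [hpt]
    exact hobj fun b => lrProd ((b : ℕ) + 1) U' (Sᵀ*V') - S
  -- nonnegativity and boundedness below
  have hM0 : ∀ UV : Matrix (Fin m) (Fin (min m n)) ℝ × Matrix (Fin n) (Fin (min m n)) ℝ,
      0 ≤ maestroObj A μ p UV.1 UV.2 := by
    intro UV
    refine integral_nonneg fun x => Finset.sum_nonneg fun b _ => mul_nonneg (hp b).le ?_
    exact Finset.sum_nonneg fun i _ => sq_nonneg _
  have hP0 : ∀ UV : Matrix (Fin m) (Fin (min m n)) ℝ × Matrix (Fin m) (Fin (min m n)) ℝ,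
      0 ≤ projObj S Vt μ p UV.1 UV.2 := by
    intro UV
    refine integral_nonneg fun x => Finset.sum_nonneg fun b _ => mul_nonneg (hp b).le ?_
    exact Finset.sum_nonneg fun i _ => sq_nonneg _
  have hMbdd : BddBelow (Set.range fun UV :
      Matrix (Fin m) (Fin (min m n)) ℝ × Matrix (Fin n) (Fin (min m n)) ℝ =>
      maestroObj A μ p UV.1 UV.2) := ⟨0, by rintro y ⟨UV, rfl⟩; exact hM0 UV⟩
  have hPbdd : BddBelow (Set.range fun UV :
      Matrix (Fin m) (Fin (min m n)) ℝ × Matrix (Fin m) (Fin (min m n)) ℝ =>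
      projObj S Vt μ p UV.1 UV.2) := ⟨0, by rintro y ⟨UV, rfl⟩; exact hP0 UV⟩
  apply le_antisymm
  · refine le_ciInf fun UV => ?_
    have heq : maestroObj A μ p (Ut*UV.1) (Vt*(Sᵀ*UV.2)) = projObj S Vt μ p UV.1 UV.2 := by
      rw [hMaestro, hProj]
      rw [← Matrix.mul_assoc Utᵀ Ut UV.1, hUorth, Matrix.one_mul,
        ← Matrix.mul_assoc Vtᵀ Vt (Sᵀ*UV.2), hVorth, Matrix.one_mul]
    exact ciInf_le_of_le hMbdd ⟨Ut*UV.1, Vt*(Sᵀ*UV.2)⟩ (le_of_eq heq)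
  · refine le_ciInf fun UV => ?_
    rw [hMaestro UV.1 UV.2]
    set Jset : Set (Fin n) := {j | ∃ i : Fin m, (i : ℕ) = (j : ℕ) ∧ S i j ≠ 0} with hJset
    have hSsupp : ∀ i j, j ∉ Jset → S i j = 0 := by
      intro i j hj
      by_cases h : (i : ℕ) = (j : ℕ)
      · by_contra hne; exact hj ⟨i, h, hne⟩
      · exact hSdiag i j h
    obtain ⟨V'', hV''supp, hV''le⟩ := key_proj Ry S Jset hSsupp (Utᵀ*UV.1) (Vtᵀ*UV.2)
    -- construct V' with Sᵀ*V' = V''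
    set V' : Matrix (Fin m) (Fin (min m n)) ℝ := Matrix.of fun i t =>
      if h : (i : ℕ) < n then
        (if S i ⟨(i : ℕ), h⟩ = 0 then 0 else V'' ⟨(i : ℕ), h⟩ t / S i ⟨(i : ℕ), h⟩)
      else 0 with hV'def
    have hSV' : Sᵀ * V' = V'' := by
      ext j t
      rw [Matrix.mul_apply]
      by_cases hjm : (j : ℕ) < m
      · set i₀ : Fin m := ⟨(j : ℕ), hjm⟩ with hi₀
        have huniq : ∀ i : Fin m, (i : ℕ) = (j : ℕ) → i = i₀ := by
          intro i hi; exact Fin.ext hi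
        rw [Finset.sum_eq_single i₀]
        · simp only [Matrix.transpose_apply, hV'def, Matrix.of_apply]
          have hin : ((i₀ : ℕ) : ℕ) < n := by
            have := j.isLt; simpa [hi₀] using this
          rw [dif_pos hin]
          have hjj : (⟨(i₀ : ℕ), hin⟩ : Fin n) = j := Fin.ext (by simp [hi₀])
          rw [hjj]
          by_cases hS0 : S i₀ j = 0
          · rw [if_pos hS0, mul_zero]
            have hjJ : j ∉ Jset := by
              rintro ⟨i, hi, hne⟩
              exact hne (huniq i hi ▸ hS0)
            exact (hV''supp j hjJ t).symm
          · rw [if_neg hS0, mul_comm, div_mul_cancel₀ _ hS0]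
        · intro i _ hi
          have : S i j = 0 := by
            refine hSdiag i j fun h => hi (huniq i h)
          rw [Matrix.transpose_apply, this, zero_mul]
        · intro h; exact absurd (Finset.mem_univ i₀) h
      · have hz : ∀ i : Fin m, S i j = 0 := by
          intro i
          refine hSdiag i j ?_
          have := i.isLt; omega
        have hjJ : j ∉ Jset := by
          rintro ⟨i, hi, hne⟩
          exact hne (hz i)
        rw [hV''supp j hjJ t]
        simp [Matrix.transpose_apply, hz]
    have hle : G (Utᵀ*UV.1) V'' ≤ G (Utᵀ*UV.1) (Vtᵀ*UV.2) := by
      rw [hG]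
      exact Finset.sum_le_sum fun b _ =>
        mul_le_mul_of_nonneg_left (hV''le ((b : ℕ) + 1)) (hp b).le
    refine ciInf_le_of_le hPbdd ⟨Utᵀ*UV.1, V'⟩ ?_
    calc projObj S Vt μ p (Utᵀ*UV.1) V' = G (Utᵀ*UV.1) (Sᵀ*V') := hProj _ _
      _ = G (Utᵀ*UV.1) V'' := by rw [hSV']
      _ ≤ G (Utᵀ*UV.1) (Vtᵀ*UV.2) := hle


end
end

section
/- Let A ∈ ℝ^{m×n} have rank k with distinct positive singular values σ₁ > σ₂ > … > σ_k > 0, with SVD A = ∑_{i=1}^k σ_i ũ_i ṽ_iᵀ where the ũ_i ∈ ℝ^m are orthonormal and the ṽ_i ∈ ℝ^n are orthonormal, and set r = min(m,n). Consider Φ(U,V) = (1/r) ∑_{b=1}^r ‖U_{:b}V_{:b}ᵀ − A‖_F² for U ∈ ℝ^{m×r}, V ∈ ℝ^{n×r}. Then the minimum of Φ equals (1/r) ∑_{b=1}^r ∑_{i=b+1}^k σ_i², and (U,V) is a global minimizer of Φ if and only if U_{:b}V_{:b}ᵀ = ∑_{i=1}^{min(b,k)} σ_i ũ_i ṽ_iᵀ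 for every b ∈ {1,…,r}; equivalently, if and only if for each i ≤ k there exists c_i ≠ 0 with u_i = c_i ũ_i and v_i = (σ_i/c_i) ṽ_i, and u_i v_iᵀ = 0 for each i > k, where u_i, v_i denote the i-th columns of U, V. In particular, up to column scaling, the minimizer recovers the SVD of A exactly and is unique. -/
open Matrix

noncomputable section

/-- Squared Frobenius norm of a matrix. -/
def frobSq {m n : ℕ} (M : Matrix (Fin m) (Fin n) ℝ) : ℝ := ∑ i, ∑ j, M i j ^ 2

/-- `Φ(U,V) = (1/r) ∑_{b=1}^r ‖U_{:b}V_{:b}ᵀ − A‖_F²` with `r = min m n`.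
(The index `b : Fin (min m n)` stands for the 1-indexed truncation level `b+1`.) -/
def nestedFrobObj {m n : ℕ} (A : Matrix (Fin m) (Fin n) ℝ)
    (U : Matrix (Fin m) (Fin (min m n)) ℝ) (V : Matrix (Fin n) (Fin (min m n)) ℝ) : ℝ :=
  (1 / (min m n : ℝ)) * ∑ b : Fin (min m n), frobSq (lrProd ((b : ℕ) + 1) U V - A)

/-- From any family of `ℓ` vectors in `ℝ^m`, extract an orthonormal family of `d ≤ ℓ`
vectors whose span contains each of the original vectors. -/
lemma exists_onb_span {m ℓ : ℕ} (f : Fin ℓ → (Fin m → ℝ)) :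
    ∃ (d : ℕ) (e : Fin d → Fin m → ℝ), d ≤ ℓ ∧
      (∀ a b : Fin d, (∑ t, e a t * e b t) = if a = b then (1:ℝ) else 0) ∧
      (∀ s : Fin ℓ, ∃ c : Fin d → ℝ, f s = fun i => ∑ a, c a * e a i) := by
  classical
  set E := EuclideanSpace ℝ (Fin m)
  set g : Fin ℓ → E := fun s => WithLp.toLp 2 (f s) with hg
  set W : Submodule ℝ E := Submodule.span ℝ (Set.range g) with hW
  haveI : FiniteDimensional ℝ W := by
    apply FiniteDimensional.span_of_finite
    exact Set.finite_range g
  set d := Module.finrank ℝ W with hd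
  have hdle : d ≤ ℓ := by
    haveI := (Set.finite_range g).fintype
    have h0 := finrank_span_le_card (R := ℝ) (Set.range g)
    calc d ≤ (Set.range g).toFinset.card := h0
      _ ≤ ℓ := by
        have hsurj : Set.SurjOn g (Finset.univ : Finset (Fin ℓ)) ((Set.range g).toFinset : Set E) := by
          intro x hx
          have hx' : x ∈ Set.range g := by
            rw [← Set.coe_toFinset (Set.range g)]; exact hx
          obtain ⟨y, hy⟩ := hx'
          exact ⟨y, Finset.mem_coe.mpr (Finset.mem_univ y), hy⟩
        exact le_trans (Finset.card_le_card_of_surjOn g hsurj) (by simp)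
  set β := stdOrthonormalBasis ℝ W with hβ
  refine ⟨d, fun a => ((β a : W) : E), hdle, ?_, ?_⟩
  · intro a b
    have := β.orthonormal
    rw [orthonormal_iff_ite] at this
    have h := this a b
    rw [Submodule.coe_inner] at h
    rw [PiLp.inner_apply] at h
    rw [← h]
    refine Finset.sum_congr rfl (fun t _ => ?_)
    simp only [RCLike.inner_apply, conj_trivial]
    ring
  · intro s
    have hmem : g s ∈ W := Submodule.subset_span ⟨s, rfl⟩
    refine ⟨fun a => β.repr ⟨g s, hmem⟩ a, ?_⟩
    have := β.sum_repr ⟨g s, hmem⟩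
    have h2 : ((∑ a, β.repr ⟨g s, hmem⟩ a • β a : W) : E) = g s := by rw [this]
    funext i
    have h3 : (∑ a : Fin d, ((β.repr ⟨g s, hmem⟩ a • β a : W) : E)) i = g s i := by
      rw [← Submodule.coe_sum]; rw [this]
    have h4 : f s i = g s i := rfl
    rw [h4, ← h3, WithLp.ofLp_sum, Finset.sum_apply]
    apply Finset.sum_congr rfl
    intro a _
    rfl

/-- Reindexing a sum over `Fin r` supported on indices `< k` to a sum over `Fin k`. -/
lemma sum_fin_lt {r k : ℕ} (hk : k ≤ r) (F : Fin r → ℝ) (hF : ∀ t : Fin r, ¬((t:ℕ) < k) → F t = 0) :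
    ∑ t : Fin r, F t = ∑ i : Fin k, F (Fin.castLE hk i) := by
  classical
  rcases Nat.eq_zero_or_pos k with hk0 | hk0
  · subst hk0
    rw [Finset.sum_eq_zero (fun t _ => hF t (by omega))]
    simp
  rw [← Finset.sum_filter_of_ne (s := (Finset.univ : Finset (Fin r))) (p := fun t => (t:ℕ) < k)
    (by intro x _ hx; by_contra hc; exact hx (hF x hc))]
  refine Finset.sum_nbij' (fun t => if h : (t:ℕ) < k then (⟨(t:ℕ), h⟩ : Fin k) else ⟨0, hk0⟩)
    (fun i => Fin.castLE hk i) ?_ ?_ ?_ ?_ ?_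
  · intro t ht; exact Finset.mem_univ _
  · intro i _; simp [Fin.castLE]
  · intro t ht
    simp only [Finset.mem_filter, Finset.mem_univ, true_and] at ht
    simp [ht]
  · intro i _
    simp [Fin.castLE]
  · intro t ht
    simp only [Finset.mem_filter, Finset.mem_univ, true_and] at ht
    simp [ht]

/-- Expansion of a dot product of two sums of vectors. -/
lemma dot_sum_sum {m N N' : ℕ} (w : Fin N → Fin m → ℝ) (w' : Fin N' → Fin m → ℝ) :
    (∑ t, (∑ p, w p t) * (∑ q, w' q t)) = ∑ p, ∑ q, ∑ t, w p t * w' q t := by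
  have h1 : ∀ t, (∑ p, w p t) * (∑ q, w' q t) = ∑ p, ∑ q, w p t * w' q t := by
    intro t; rw [Finset.sum_mul_sum]
  rw [Finset.sum_congr rfl (fun t _ => h1 t)]
  rw [Finset.sum_comm]
  apply Finset.sum_congr rfl; intro p _
  rw [Finset.sum_comm]

/-- Master bilinear expansion for Frobenius-type double sums. -/
lemma frob_dot {m n N N' : ℕ} (w : Fin N → Fin m → ℝ) (z : Fin N → Fin n → ℝ)
    (w' : Fin N' → Fin m → ℝ) (z' : Fin N' → Fin n → ℝ) :
    (∑ i, ∑ j, (∑ p, w p i * z p j) * (∑ q, w' q i * z' q j))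
      = ∑ p, ∑ q, (∑ i, w p i * w' q i) * (∑ j, z p j * z' q j) := by
  have h1 : ∀ i j, (∑ p, w p i * z p j) * (∑ q, w' q i * z' q j)
      = ∑ p, ∑ q, (w p i * w' q i) * (z p j * z' q j) := by
    intro i j
    rw [Finset.sum_mul_sum]
    exact Finset.sum_congr rfl (fun p _ => Finset.sum_congr rfl (fun q _ => by ring))
  have h2 : ∀ p q, (∑ i, w p i * w' q i) * (∑ j, z p j * z' q j)
      = ∑ i, ∑ j, (w p i * w' q i) * (z p j * z' q j) := by
    intro p q; rw [Finset.sum_mul_sum]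
  calc (∑ i, ∑ j, (∑ p, w p i * z p j) * (∑ q, w' q i * z' q j))
      = ∑ i, ∑ j, ∑ p, ∑ q, (w p i * w' q i) * (z p j * z' q j) :=
        Finset.sum_congr rfl (fun i _ => Finset.sum_congr rfl (fun j _ => h1 i j))
    _ = ∑ i, ∑ p, ∑ j, ∑ q, (w p i * w' q i) * (z p j * z' q j) :=
        Finset.sum_congr rfl (fun i _ => Finset.sum_comm)
    _ = ∑ p, ∑ i, ∑ j, ∑ q, (w p i * w' q i) * (z p j * z' q j) := Finset.sum_comm
    _ = ∑ p, ∑ i, ∑ q, ∑ j, (w p i * w' q i) * (z p j * z' q j) :=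
        Finset.sum_congr rfl (fun p _ => Finset.sum_congr rfl (fun i _ => Finset.sum_comm))
    _ = ∑ p, ∑ q, ∑ i, ∑ j, (w p i * w' q i) * (z p j * z' q j) :=
        Finset.sum_congr rfl (fun p _ => Finset.sum_comm)
    _ = ∑ p, ∑ q, (∑ i, w p i * w' q i) * (∑ j, z p j * z' q j) :=
        Finset.sum_congr rfl (fun p _ => Finset.sum_congr rfl (fun q _ => (h2 p q).symm))

/-- Raw Bessel inequality for a finite orthonormal family. -/
lemma bessel_raw {m N : ℕ} (u : Fin N → Fin m → ℝ)
    (hu : ∀ i j : Fin N, (∑ t, u i t * u j t) = if i = j then (1:ℝ) else 0)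
    (x : Fin m → ℝ) :
    (∑ i, (∑ t, x t * u i t)^2) ≤ ∑ t, x t * x t := by
  classical
  set c : Fin N → ℝ := fun i => ∑ t, x t * u i t with hc
  have key : (0:ℝ) ≤ ∑ t, (x t - ∑ i, c i * u i t) * (x t - ∑ i, c i * u i t) :=
    Finset.sum_nonneg (fun t _ => mul_self_nonneg _)
  have e2 : (∑ t, x t * ∑ i, c i * u i t) = ∑ i, c i ^ 2 := by
    calc (∑ t, x t * ∑ i, c i * u i t) = ∑ t, ∑ i, c i * (x t * u i t) := by
          refine Finset.sum_congr rfl (fun t _ => ?_)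
          rw [Finset.mul_sum]; exact Finset.sum_congr rfl (fun i _ => by ring)
      _ = ∑ i, ∑ t, c i * (x t * u i t) := Finset.sum_comm
      _ = ∑ i, c i ^ 2 := by
          refine Finset.sum_congr rfl (fun i _ => ?_)
          rw [← Finset.mul_sum]
          have : (∑ t, x t * u i t) = c i := rfl
          rw [this]; ring
  have e3 : (∑ t, (∑ i, c i * u i t) * (∑ i, c i * u i t)) = ∑ i, c i ^ 2 := by
    have := dot_sum_sum (fun i t => c i * u i t) (fun i t => c i * u i t)
    rw [this]
    have h4 : ∀ p q : Fin N, (∑ t, (c p * u p t) * (c q * u q t))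
        = c p * c q * (if p = q then (1:ℝ) else 0) := by
      intro p q
      rw [← hu p q, Finset.mul_sum]
      exact Finset.sum_congr rfl (fun t _ => by ring)
    rw [Finset.sum_congr rfl (fun p _ => Finset.sum_congr rfl (fun q _ => h4 p q))]
    refine Finset.sum_congr rfl (fun p _ => ?_)
    rw [Finset.sum_eq_single p]
    · simp; ring
    · intro q _ hq; simp [Ne.symm hq]
    · intro h; exact absurd (Finset.mem_univ p) h
  have expand : (∑ t, (x t - ∑ i, c i * u i t) * (x t - ∑ i, c i * u i t))
      = (∑ t, x t * x t) - ∑ i, c i ^ 2 := by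
    have e1 : ∀ t, (x t - ∑ i, c i * u i t) * (x t - ∑ i, c i * u i t)
        = x t * x t - 2 * (x t * ∑ i, c i * u i t)
          + (∑ i, c i * u i t) * (∑ i, c i * u i t) := fun t => by ring
    rw [Finset.sum_congr rfl (fun t _ => e1 t), Finset.sum_add_distrib, Finset.sum_sub_distrib,
      ← Finset.mul_sum, e2, e3]
    ring
  rw [expand] at key
  have : (∑ i, c i ^ 2) ≤ ∑ t, x t * x t := by linarith
  exact this

/-- A sum of squares is zero iff each term is zero. -/
lemma sq_sum_zero {N : ℕ} (f : Fin N → ℝ) (h : ∑ i, f i ^ 2 = 0) : ∀ i, f i = 0 := by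
  intro i
  have := (Finset.sum_eq_zero_iff_of_nonneg (fun j _ => sq_nonneg (f j))).1 h i (Finset.mem_univ i)
  exact pow_eq_zero_iff (by norm_num) |>.1 this

/-- Rearrangement bound with equality case. -/
lemma rearrange {k : ℕ} (s t : Fin k → ℝ) (hpos : ∀ i, 0 < s i)
    (hstrict : ∀ i j : Fin k, i < j → s j < s i) (ℓ : ℕ)
    (ht0 : ∀ i, 0 ≤ t i) (ht1 : ∀ i, t i ≤ 1) (htsum : ∑ i, t i ≤ (ℓ:ℝ))
    (hcard : (∑ i : Fin k, if (i:ℕ) < ℓ then (1:ℝ) else 0) = (min ℓ k : ℝ)) :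
    (∑ i, s i * t i ≤ ∑ i : Fin k, if (i:ℕ) < ℓ then s i else 0) ∧
    ((∑ i, s i * t i) = (∑ i : Fin k, if (i:ℕ) < ℓ then s i else 0) →
      ∀ i, t i = if (i:ℕ) < ℓ then 1 else 0) := by
  classical
  by_cases hkl : k ≤ ℓ
  · have hall : ∀ i : Fin k, (i:ℕ) < ℓ := fun i => lt_of_lt_of_le i.isLt hkl
    have hre : (∑ i : Fin k, if (i:ℕ) < ℓ then s i else 0) = ∑ i, s i :=
      Finset.sum_congr rfl (fun i _ => by rw [if_pos (hall i)])
    have hterm : ∀ i : Fin k, i ∈ Finset.univ → s i * t i ≤ s i := by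
      intro i _
      calc s i * t i ≤ s i * 1 := mul_le_mul_of_nonneg_left (ht1 i) (le_of_lt (hpos i))
        _ = s i := mul_one _
    constructor
    · rw [hre]; exact Finset.sum_le_sum hterm
    · intro heq i
      rw [hre] at heq
      have h1 := (Finset.sum_eq_sum_iff_of_le hterm).1 heq i (Finset.mem_univ i)
      rw [if_pos (hall i)]
      have h2 : s i * (t i - 1) = 0 := by linarith [h1]
      rcases mul_eq_zero.1 h2 with h | h
      · exact absurd h (ne_of_gt (hpos i))
      · linarith
  · push_neg at hkl
    have hcard2 : (∑ i : Fin k, if (i:ℕ) < ℓ then (1:ℝ) else 0) = (ℓ:ℝ) := by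
      rw [hcard]; exact min_eq_left (by exact_mod_cast le_of_lt hkl)
    clear hcard; have hcard := hcard2
    set c : Fin k := ⟨ℓ, hkl⟩ with hc
    have hscpos := hpos c
    set D : Fin k → ℝ := fun i => (if (i:ℕ) < ℓ then s i else 0) - s i * t i with hD
    set E : Fin k → ℝ := fun i => s c * ((if (i:ℕ) < ℓ then (1:ℝ) else 0) - t i) with hE
    have hslt : ∀ i : Fin k, (i:ℕ) < ℓ → s c < s i := by
      intro i hi
      exact hstrict i c (Fin.lt_def.2 (by simp only [hc]; exact hi))
    have hsgt : ∀ i : Fin k, (ℓ:ℕ) < (i:ℕ) → s i < s c := by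
      intro i hi
      exact hstrict c i (Fin.lt_def.2 (by simp only [hc]; exact hi))
    have hsge : ∀ i : Fin k, ¬((i:ℕ) < ℓ) → s i ≤ s c := by
      intro i hi
      rcases eq_or_lt_of_le (not_lt.1 hi) with h | h
      · have : i = c := Fin.ext h.symm
        rw [this]
      · exact le_of_lt (hsgt i h)
    have hDE : ∀ i, E i ≤ D i := by
      intro i
      by_cases hi : (i:ℕ) < ℓ
      · simp only [hD, hE, if_pos hi]
        nlinarith [mul_le_mul_of_nonneg_right (le_of_lt (hslt i hi))
          (by linarith [ht1 i] : (0:ℝ) ≤ 1 - t i)]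
      · simp only [hD, hE, if_neg hi]
        nlinarith [mul_le_mul_of_nonneg_right (hsge i hi) (ht0 i)]
    have hEsum : (∑ i, E i) = s c * ((ℓ:ℝ) - ∑ i, t i) := by
      simp only [hE]
      rw [← Finset.mul_sum, Finset.sum_sub_distrib, hcard]
    have hEnn : (0:ℝ) ≤ ∑ i, E i := by
      rw [hEsum]
      apply mul_nonneg (le_of_lt hscpos)
      linarith
    have hDsum : (∑ i, D i)
        = (∑ i : Fin k, if (i:ℕ) < ℓ then s i else 0) - ∑ i, s i * t i := by
      simp only [hD]; rw [Finset.sum_sub_distrib]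
    constructor
    · have : (0:ℝ) ≤ ∑ i, D i := le_trans hEnn (Finset.sum_le_sum (fun i _ => hDE i))
      rw [hDsum] at this; linarith
    · intro heq
      have hDzero : (∑ i, D i) = 0 := by rw [hDsum, heq]; ring
      have hED : (∑ i, E i) = ∑ i, D i := by
        have h1 : (∑ i, E i) ≤ ∑ i, D i := Finset.sum_le_sum (fun i _ => hDE i)
        rw [hDzero] at h1 ⊢
        linarith
      have hEeqD : ∀ i, E i = D i :=
        fun i => (Finset.sum_eq_sum_iff_of_le (fun i _ => hDE i)).1 hED i (Finset.mem_univ i)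
      have hEzero : (∑ i, E i) = 0 := by rw [hED, hDzero]
      have htsum' : (∑ i, t i) = (ℓ:ℝ) := by
        rw [hEsum] at hEzero
        rcases mul_eq_zero.1 hEzero with h | h
        · exact absurd h (ne_of_gt hscpos)
        · linarith
      have ht_lt : ∀ i : Fin k, (i:ℕ) < ℓ → t i = 1 := by
        intro i hi
        have h0 := hEeqD i
        simp only [hD, hE, if_pos hi] at h0
        have h2 : (s i - s c) * (1 - t i) = 0 := by nlinarith [h0]
        rcases mul_eq_zero.1 h2 with h | h
        · exact absurd h (by nlinarith [hslt i hi])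
        · linarith
      have ht_gt : ∀ i : Fin k, (ℓ:ℕ) < (i:ℕ) → t i = 0 := by
        intro i hi
        have h0 := hEeqD i
        have hni : ¬((i:ℕ) < ℓ) := by omega
        simp only [hD, hE, if_neg hni] at h0
        have h2 : (s c - s i) * t i = 0 := by nlinarith [h0]
        rcases mul_eq_zero.1 h2 with h | h
        · exact absurd h (by nlinarith [hsgt i hi])
        · exact h
      have htc : t c = 0 := by
        have hsplit : ∀ i : Fin k, t i = (if (i:ℕ) < ℓ then (1:ℝ) else 0)
            + (if i = c then t c else 0) := by
          intro i
          by_cases hi : (i:ℕ) < ℓ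
          · rw [if_pos hi, if_neg (by intro h; rw [h] at hi; simp only [hc] at hi; omega),
              ht_lt i hi]
            ring
          · by_cases hic : i = c
            · rw [if_neg hi, if_pos hic, hic]; ring
            · have hgt : (ℓ:ℕ) < (i:ℕ) := by
                have h3 := Fin.val_ne_of_ne hic
                simp only [hc] at h3
                omega
              rw [if_neg hi, if_neg hic, ht_gt i hgt]; ring
        have h4 : (∑ i, t i) = (ℓ:ℝ) + t c := by
          rw [Finset.sum_congr rfl (fun i _ => hsplit i), Finset.sum_add_distrib, hcard,
            Finset.sum_ite_eq' Finset.univ c (fun _ => t c), if_pos (Finset.mem_univ c)]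
        rw [htsum'] at h4; linarith
      intro i
      by_cases hi : (i:ℕ) < ℓ
      · rw [if_pos hi]; exact ht_lt i hi
      · rw [if_neg hi]
        by_cases hic : i = c
        · rw [hic]; exact htc
        · apply ht_gt
          have h3 := Fin.val_ne_of_ne hic
          simp only [hc] at h3
          omega

/-- Counting: the number of `i : Fin k` with `i < ℓ` is `min ℓ k`. -/
lemma card_lt_fin (k ℓ : ℕ) :
    (∑ i : Fin k, if (i:ℕ) < ℓ then (1:ℝ) else 0) = (min ℓ k : ℝ) := by
  classical
  induction k with
  | zero => simp
  | succ k ih =>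
    rw [Fin.sum_univ_castSucc]
    simp only [Fin.coe_castSucc, Fin.val_last]
    rw [ih]
    by_cases h : k < ℓ
    · rw [if_pos h, ← Nat.cast_min, ← Nat.cast_min]
      exact_mod_cast (by omega : min ℓ k + 1 = min ℓ (k+1))
    · rw [if_neg h, add_zero, ← Nat.cast_min, ← Nat.cast_min]
      exact_mod_cast (by omega : min ℓ k = min ℓ (k+1))

lemma sum_ite_diag {N : ℕ} (C : Fin N → Fin N → ℝ) :
    (∑ p, ∑ q, C p q * (if p = q then (1:ℝ) else 0)) = ∑ p, C p p := by
  refine Finset.sum_congr rfl (fun p _ => ?_)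
  rw [Finset.sum_eq_single p]
  · simp
  · intro q _ hq; simp [Ne.symm hq]
  · intro h; exact absurd (Finset.mem_univ p) h

lemma sum_inner_swap {m N : ℕ} (c : Fin N → ℝ) (w : Fin N → Fin m → ℝ) (Z : Fin m → ℝ) :
    (∑ i, (∑ s, c s * w s i) * Z i) = ∑ s, c s * ∑ i, w s i * Z i := by
  have h1 : ∀ i, (∑ s, c s * w s i) * Z i = ∑ s, c s * (w s i * Z i) := by
    intro i; rw [Finset.sum_mul]; exact Finset.sum_congr rfl (fun s _ => by ring)
  rw [Finset.sum_congr rfl (fun i _ => h1 i), Finset.sum_comm]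
  exact Finset.sum_congr rfl (fun s _ => by rw [Finset.mul_sum])

lemma frobSq_nonneg {m n : ℕ} (X : Matrix (Fin m) (Fin n) ℝ) : 0 ≤ frobSq X :=
  Finset.sum_nonneg fun i _ => Finset.sum_nonneg fun j _ => sq_nonneg _

lemma frobSq_eq_zero {m n : ℕ} (X : Matrix (Fin m) (Fin n) ℝ) (h : frobSq X = 0) :
    ∀ i j, X i j = 0 := by
  intro i j
  unfold frobSq at h
  have h1 : ∀ i : Fin m, (∑ j, X i j ^ 2) = 0 := fun i =>
    (Finset.sum_eq_zero_iff_of_nonneg (fun i _ => Finset.sum_nonneg fun j _ => sq_nonneg _)).1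
      h i (Finset.mem_univ i)
  exact sq_sum_zero (fun j => X i j) (h1 i) j

lemma frobSq_split {m n : ℕ} (X Y : Matrix (Fin m) (Fin n) ℝ)
    (horth : (∑ i, ∑ j, X i j * Y i j) = 0) :
    frobSq (X + Y) = frobSq X + frobSq Y := by
  unfold frobSq
  have h1 : ∀ i j, (X + Y) i j ^ 2 = X i j ^ 2 + Y i j ^ 2 + 2 * (X i j * Y i j) := by
    intro i j; simp only [Matrix.add_apply]; ring
  calc (∑ i, ∑ j, (X + Y) i j ^ 2)
      = ∑ i, ((∑ j, X i j ^ 2) + (∑ j, Y i j ^ 2) + 2 * ∑ j, X i j * Y i j) := by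
        refine Finset.sum_congr rfl (fun i _ => ?_)
        rw [Finset.sum_congr rfl (fun j _ => h1 i j), Finset.sum_add_distrib,
          Finset.sum_add_distrib, ← Finset.mul_sum]
    _ = (∑ i, ∑ j, X i j ^ 2) + (∑ i, ∑ j, Y i j ^ 2) + 2 * ∑ i, ∑ j, X i j * Y i j := by
        rw [Finset.sum_add_distrib, Finset.sum_add_distrib, ← Finset.mul_sum]
    _ = (∑ i, ∑ j, X i j ^ 2) + (∑ i, ∑ j, Y i j ^ 2) := by rw [horth]; ring

/-- Core Eckart–Young-type bound with equality case. -/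
lemma EY {m n k r : ℕ} (σ : Fin k → ℝ) (hσpos : ∀ i, 0 < σ i)
    (hσstrict : ∀ i j : Fin k, i < j → σ j < σ i)
    (u : Fin k → Fin m → ℝ) (v : Fin k → Fin n → ℝ)
    (hu : ∀ i j : Fin k, (∑ t, u i t * u j t) = if i = j then (1 : ℝ) else 0)
    (hv : ∀ i j : Fin k, (∑ t, v i t * v j t) = if i = j then (1 : ℝ) else 0)
    (ℓ : ℕ) (U : Matrix (Fin m) (Fin r) ℝ) (V : Matrix (Fin n) (Fin r) ℝ) :
    ((∑ i : Fin k, if ℓ ≤ (i:ℕ) then σ i ^ 2 else 0)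
      ≤ frobSq (lrProd ℓ U V - ∑ i : Fin k, σ i • Matrix.vecMulVec (u i) (v i))) ∧
    (frobSq (lrProd ℓ U V - ∑ i : Fin k, σ i • Matrix.vecMulVec (u i) (v i))
        = (∑ i : Fin k, if ℓ ≤ (i:ℕ) then σ i ^ 2 else 0) →
      lrProd ℓ U V
        = ∑ i : Fin k, if (i:ℕ) < ℓ then σ i • Matrix.vecMulVec (u i) (v i) else 0) := by
  classical
  set ℓ' := min ℓ r with hℓ'
  set M := lrProd ℓ U V with hMdef
  set A := ∑ i : Fin k, σ i • Matrix.vecMulVec (u i) (v i) with hAdef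
  have hAent : ∀ i j, A i j = ∑ p, σ p * u p i * v p j := by
    intro i j
    rw [hAdef, Matrix.sum_apply]
    refine Finset.sum_congr rfl (fun p _ => ?_)
    simp [Matrix.vecMulVec_apply, mul_assoc]
  set colU : Fin ℓ' → Fin m → ℝ := fun s i => U i (Fin.castLE (min_le_right ℓ r) s) with hcolU
  set colV : Fin ℓ' → Fin n → ℝ := fun s j => V j (Fin.castLE (min_le_right ℓ r) s) with hcolV
  have hMent : ∀ i j, M i j = ∑ s : Fin ℓ', colU s i * colV s j := by
    intro i j
    rw [hMdef]
    show (∑ t : Fin r, if (t:ℕ) < ℓ then U i t * V j t else 0) = _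
    rw [sum_fin_lt (k := ℓ') (min_le_right ℓ r)
      (fun t => if (t:ℕ) < ℓ then U i t * V j t else 0)
      (by
        intro t ht
        have h1 : (t:ℕ) < r := t.isLt
        rw [hℓ'] at ht
        exact if_neg (by omega))]
    refine Finset.sum_congr rfl (fun s _ => ?_)
    have hs : (s:ℕ) < min ℓ r := lt_of_lt_of_le s.isLt (le_of_eq hℓ')
    have hlt : ((Fin.castLE (min_le_right ℓ r) s : Fin r) : ℕ) < ℓ := by
      simp only [Fin.coe_castLE]; omega
    exact if_pos hlt
  obtain ⟨d, e, hd, he, hspan⟩ := exists_onb_span colU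
  set β : Fin k → Fin d → ℝ := fun p a => ∑ x, e a x * u p x with hβ
  set G : Fin k → Fin m → ℝ := fun p i => ∑ a, β p a * e a i with hG
  set τ : Fin k → ℝ := fun p => ∑ a, β p a ^ 2 with hτ
  -- dot products with G
  have hGdot : ∀ p q, (∑ i, G p i * G q i) = ∑ a, β p a * β q a := by
    intro p q
    rw [hG]
    rw [dot_sum_sum (fun a i => β p a * e a i) (fun b i => β q b * e b i)]
    have h1 : ∀ a b : Fin d, (∑ i, (β p a * e a i) * (β q b * e b i))
        = (β p a * β q b) * (if a = b then (1:ℝ) else 0) := by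
      intro a b
      rw [← he a b, Finset.mul_sum]
      exact Finset.sum_congr rfl (fun i _ => by ring)
    rw [Finset.sum_congr rfl (fun a _ => Finset.sum_congr rfl (fun b _ => h1 a b)),
      sum_ite_diag]
  have hGu : ∀ p q, (∑ i, G p i * u q i) = ∑ a, β p a * β q a := by
    intro p q
    rw [hG, sum_inner_swap (fun a => β p a) (fun a i => e a i) (fun i => u q i)]
  have hWW : ∀ p, (∑ i, (G p i - u p i) * (G p i - u p i)) = 1 - τ p := by
    intro p
    have h1 : ∀ i, (G p i - u p i) * (G p i - u p i)
        = G p i * G p i - 2 * (G p i * u p i) + u p i * u p i := fun i => by ring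
    rw [Finset.sum_congr rfl (fun i _ => h1 i), Finset.sum_add_distrib,
      Finset.sum_sub_distrib, ← Finset.mul_sum, hGdot, hGu, hu]
    rw [if_pos rfl, hτ]
    have : (∑ a, β p a * β p a) = ∑ a, β p a ^ 2 :=
      Finset.sum_congr rfl (fun a _ => by ring)
    rw [this]; ring
  -- orthogonality of span(e) against G p - u p
  have hX0 : ∀ (p : Fin k) (c : Fin d → ℝ),
      (∑ i, (∑ a, c a * e a i) * (G p i - u p i)) = 0 := by
    intro p c
    rw [sum_inner_swap c (fun a i => e a i) (fun i => G p i - u p i)]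
    apply Finset.sum_eq_zero
    intro a _
    have h1 : (∑ i, e a i * (G p i - u p i)) = 0 := by
      have h2 : (∑ i, e a i * G p i) = β p a := by
        have h3 : ∀ i, e a i * G p i = ∑ b, β p b * (e a i * e b i) := by
          intro i; rw [hG, Finset.mul_sum]
          exact Finset.sum_congr rfl (fun b _ => by ring)
        rw [Finset.sum_congr rfl (fun i _ => h3 i), Finset.sum_comm]
        have h4 : ∀ b, (∑ i, β p b * (e a i * e b i)) = β p b * (if a = b then (1:ℝ) else 0) := by
          intro b; rw [← Finset.mul_sum, he]
        rw [Finset.sum_congr rfl (fun b _ => h4 b)]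
        rw [Finset.sum_eq_single a]
        · simp
        · intro b _ hb; simp [Ne.symm hb]
        · intro h; exact absurd (Finset.mem_univ a) h
      have h5 : ∀ i, e a i * (G p i - u p i) = e a i * G p i - e a i * u p i :=
        fun i => by ring
      rw [Finset.sum_congr rfl (fun i _ => h5 i), Finset.sum_sub_distrib, h2, sub_eq_zero]
    rw [h1, mul_zero]
  -- the residual matrix Y = QA - A and head X = M - QA
  set Y : Matrix (Fin m) (Fin n) ℝ :=
    Matrix.of (fun i j => ∑ p, (σ p * v p j) * (G p i - u p i)) with hY
  set X : Matrix (Fin m) (Fin n) ℝ := M - A - Y with hXdef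
  have hXent : ∀ i j, X i j
      = (∑ s : Fin ℓ', colV s j * colU s i) - ∑ p, (σ p * v p j) * G p i := by
    intro i j
    rw [hXdef]
    simp only [Matrix.sub_apply, hY, Matrix.of_apply]
    rw [hMent i j, hAent i j]
    have h1 : (∑ s : Fin ℓ', colU s i * colV s j) = ∑ s : Fin ℓ', colV s j * colU s i :=
      Finset.sum_congr rfl (fun s _ => by ring)
    have h2 : (∑ p, (σ p * v p j) * (G p i - u p i))
        = (∑ p, (σ p * v p j) * G p i) - ∑ p, σ p * u p i * v p j := by
      rw [← Finset.sum_sub_distrib]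
      exact Finset.sum_congr rfl (fun p _ => by ring)
    rw [h1, h2]; ring
  -- cross term vanishes
  have hcross : (∑ i, ∑ j, X i j * Y i j) = 0 := by
    rw [Finset.sum_comm]
    apply Finset.sum_eq_zero
    intro j _
    have h1 : ∀ i, X i j * Y i j = (∑ p, (σ p * v p j) * ((G p i - u p i) * X i j)) := by
      intro i
      have : Y i j = ∑ p, (σ p * v p j) * (G p i - u p i) := rfl
      rw [this, Finset.mul_sum]
      exact Finset.sum_congr rfl (fun p _ => by ring)
    rw [Finset.sum_congr rfl (fun i _ => h1 i), Finset.sum_comm]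
    apply Finset.sum_eq_zero
    intro p _
    rw [← Finset.mul_sum]
    have h2 : (∑ i, (G p i - u p i) * X i j) = 0 := by
      have h3 : ∀ i, (G p i - u p i) * X i j
          = (∑ s : Fin ℓ', colV s j * colU s i) * (G p i - u p i)
            - (∑ q, (σ q * v q j) * G q i) * (G p i - u p i) := by
        intro i; rw [hXent i j]; ring
      rw [Finset.sum_congr rfl (fun i _ => h3 i), Finset.sum_sub_distrib]
      have h4 : (∑ i, (∑ s : Fin ℓ', colV s j * colU s i) * (G p i - u p i)) = 0 := by
        have h5 : ∀ i, (∑ s : Fin ℓ', colV s j * colU s i)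
            = ∑ s : Fin ℓ', ∑ a, (colV s j * Classical.choose (hspan s) a) * e a i := by
          intro i
          refine Finset.sum_congr rfl (fun s _ => ?_)
          have h6 := Classical.choose_spec (hspan s)
          conv_lhs => rw [h6]
          rw [Finset.mul_sum]
          exact Finset.sum_congr rfl (fun a _ => by ring)
        rw [Finset.sum_congr rfl (fun i _ => by rw [h5 i])]
        have h7 : ∀ i, (∑ s : Fin ℓ', ∑ a, (colV s j * Classical.choose (hspan s) a) * e a i)
            * (G p i - u p i)
            = ∑ s : Fin ℓ', (∑ a, (colV s j * Classical.choose (hspan s) a) * e a i)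
              * (G p i - u p i) := by
          intro i; rw [Finset.sum_mul]
        rw [Finset.sum_congr rfl (fun i _ => h7 i), Finset.sum_comm]
        apply Finset.sum_eq_zero
        intro s _
        exact hX0 p (fun a => colV s j * Classical.choose (hspan s) a)
      have h8 : (∑ i, (∑ q, (σ q * v q j) * G q i) * (G p i - u p i)) = 0 := by
        have h9 : ∀ i, (∑ q, (σ q * v q j) * G q i) * (G p i - u p i)
            = ∑ q, (σ q * v q j) * (G q i * (G p i - u p i)) := by
          intro i; rw [Finset.sum_mul]
          exact Finset.sum_congr rfl (fun q _ => by ring)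
        rw [Finset.sum_congr rfl (fun i _ => h9 i), Finset.sum_comm]
        apply Finset.sum_eq_zero
        intro q _
        rw [← Finset.mul_sum]
        have h10 : (∑ i, G q i * (G p i - u p i)) = 0 := by
          have h11 : ∀ i, G q i * (G p i - u p i) = (∑ a, β q a * e a i) * (G p i - u p i) := by
            intro i; rw [hG]
          rw [Finset.sum_congr rfl (fun i _ => h11 i)]
          exact hX0 p (fun a => β q a)
        rw [h10, mul_zero]
      rw [h4, h8]; ring
    rw [h2, mul_zero]
  -- frobSq Y
  have hYfrob : frobSq Y = ∑ p, σ p ^ 2 * (1 - τ p) := by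
    unfold frobSq
    have h1 : ∀ i j, (Y i j) ^ 2
        = (∑ p, (σ p * (G p i - u p i)) * v p j) * (∑ q, (σ q * (G q i - u q i)) * v q j) := by
      intro i j
      have : Y i j = ∑ p, (σ p * (G p i - u p i)) * v p j := by
        show (∑ p, (σ p * v p j) * (G p i - u p i)) = _
        exact Finset.sum_congr rfl (fun p _ => by ring)
      rw [this]; ring
    rw [Finset.sum_congr rfl (fun i _ => Finset.sum_congr rfl (fun j _ => h1 i j))]
    rw [frob_dot (fun p i => σ p * (G p i - u p i)) (fun p j => v p j)
      (fun p i => σ p * (G p i - u p i)) (fun p j => v p j)]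
    have h2 : ∀ p q, (∑ i, (σ p * (G p i - u p i)) * (σ q * (G q i - u q i)))
        * (∑ j, v p j * v q j)
        = ((σ p * σ q) * ∑ i, (G p i - u p i) * (G q i - u q i))
          * (if p = q then (1:ℝ) else 0) := by
      intro p q
      rw [hv p q, Finset.mul_sum]
      congr 1
      exact Finset.sum_congr rfl (fun i _ => by ring)
    rw [Finset.sum_congr rfl (fun p _ => Finset.sum_congr rfl (fun q _ => h2 p q)),
      sum_ite_diag]
    refine Finset.sum_congr rfl (fun p _ => ?_)
    rw [hWW p]; ring
  -- decomposition
  have hdecomp : frobSq (M - A) = frobSq X + frobSq Y := by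
    have hMA : M - A = X + Y := by rw [hXdef]; abel
    rw [hMA]
    exact frobSq_split X Y hcross
  -- τ bounds
  have hτ0 : ∀ p, 0 ≤ τ p := fun p => Finset.sum_nonneg (fun a _ => sq_nonneg _)
  have hτ1 : ∀ p, τ p ≤ 1 := by
    intro p
    have h1 := bessel_raw e he (u p)
    have h2 : (∑ a, (∑ t, u p t * e a t) ^ 2) = τ p := by
      refine Finset.sum_congr rfl (fun a _ => ?_)
      congr 1
      exact Finset.sum_congr rfl (fun t _ => by ring)
    rw [h2] at h1
    rw [hu p p, if_pos rfl] at h1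
    exact h1
  have hτsum : (∑ p, τ p) ≤ (ℓ:ℝ) := by
    have h1 : (∑ p, τ p) = ∑ a, ∑ p, (∑ t, e a t * u p t) ^ 2 := by
      rw [hτ, Finset.sum_comm]
    have h2 : ∀ a : Fin d, (∑ p, (∑ t, e a t * u p t) ^ 2) ≤ 1 := by
      intro a
      have h3 := bessel_raw u hu (e a)
      rw [he a a, if_pos rfl] at h3
      exact h3
    calc (∑ p, τ p) ≤ ∑ a : Fin d, (1:ℝ) := by
          rw [h1]; exact Finset.sum_le_sum (fun a _ => h2 a)
      _ = (d:ℝ) := by simp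
      _ ≤ (ℓ:ℝ) := by
          have : d ≤ ℓ := le_trans hd (min_le_left ℓ r)
          exact_mod_cast this
  -- rearrangement
  have hrear := rearrange (fun p => σ p ^ 2) τ (fun p => pow_pos (hσpos p) 2)
    (fun p q hpq => by
      show σ q ^ 2 < σ p ^ 2
      nlinarith [hσstrict p q hpq, hσpos p, hσpos q]) ℓ
    hτ0 hτ1 hτsum (card_lt_fin k ℓ)
  have hcomp : (∑ p : Fin k, if (p:ℕ) < ℓ then σ p ^ 2 else 0)
      + (∑ p : Fin k, if ℓ ≤ (p:ℕ) then σ p ^ 2 else 0) = ∑ p, σ p ^ 2 := by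
    rw [← Finset.sum_add_distrib]
    refine Finset.sum_congr rfl (fun p _ => ?_)
    by_cases hp : (p:ℕ) < ℓ
    · rw [if_pos hp, if_neg (by omega)]; ring
    · rw [if_neg hp, if_pos (by omega)]; ring
  have hYtail : (∑ p : Fin k, if ℓ ≤ (p:ℕ) then σ p ^ 2 else 0) ≤ frobSq Y := by
    rw [hYfrob]
    have h1 : (∑ p, σ p ^ 2 * (1 - τ p)) = (∑ p, σ p ^ 2) - ∑ p, σ p ^ 2 * τ p := by
      rw [← Finset.sum_sub_distrib]
      exact Finset.sum_congr rfl (fun p _ => by ring)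
    rw [h1]
    have h2 := hrear.1
    linarith [hcomp, h2]
  constructor
  · calc (∑ p : Fin k, if ℓ ≤ (p:ℕ) then σ p ^ 2 else 0) ≤ frobSq Y := hYtail
      _ ≤ frobSq X + frobSq Y := by linarith [frobSq_nonneg X]
      _ = frobSq (M - A) := hdecomp.symm
  · intro heq
    have hX0' : frobSq X = 0 := by
      have := frobSq_nonneg X
      have := frobSq_nonneg Y
      linarith [hdecomp, heq, hYtail]
    have hYeq : frobSq Y = ∑ p : Fin k, if ℓ ≤ (p:ℕ) then σ p ^ 2 else 0 := by
      linarith [hdecomp, heq, hX0', hYtail]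
    -- equality in rearrangement
    have hreq : (∑ p, σ p ^ 2 * τ p) = ∑ p : Fin k, if (p:ℕ) < ℓ then σ p ^ 2 else 0 := by
      rw [hYfrob] at hYeq
      have h1 : (∑ p, σ p ^ 2 * (1 - τ p)) = (∑ p, σ p ^ 2) - ∑ p, σ p ^ 2 * τ p := by
        rw [← Finset.sum_sub_distrib]
        exact Finset.sum_congr rfl (fun p _ => by ring)
      rw [h1] at hYeq
      linarith [hcomp]
    have hτval := hrear.2 hreq
    -- G p = u p for p < ℓ, G p = 0 for p ≥ ℓ
    have hGlt : ∀ p : Fin k, (p:ℕ) < ℓ → ∀ i, G p i = u p i := by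
      intro p hp i
      have h1 : (∑ i, (G p i - u p i) ^ 2) = 0 := by
        have h2 : (∑ i, (G p i - u p i) ^ 2) = ∑ i, (G p i - u p i) * (G p i - u p i) :=
          Finset.sum_congr rfl (fun i _ => sq (G p i - u p i) ▸ by ring)
        rw [h2, hWW p, hτval p, if_pos hp]; ring
      have := sq_sum_zero _ h1 i
      linarith [this]
    have hGge : ∀ p : Fin k, ¬((p:ℕ) < ℓ) → ∀ i, G p i = 0 := by
      intro p hp i
      have h1 : (∑ i, G p i ^ 2) = 0 := by
        have h2 : (∑ i, G p i ^ 2) = ∑ a, β p a * β p a := by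
          rw [← hGdot p p]
          exact Finset.sum_congr rfl (fun i _ => by ring)
        have h3 : (∑ a, β p a * β p a) = τ p := by
          rw [hτ]; exact Finset.sum_congr rfl (fun a _ => by ring)
        rw [h2, h3, hτval p, if_neg hp]
      exact sq_sum_zero _ h1 i
    -- conclude M = truncation
    have hXz := frobSq_eq_zero X hX0'
    funext i j
    have h1 : M i j = A i j + Y i j := by
      have := hXz i j
      rw [hXdef] at this
      simp only [Matrix.sub_apply] at this
      linarith [this]
    have h2 : A i j + Y i j = ∑ p, σ p * G p i * v p j := by
      rw [hAent i j]
      have : Y i j = ∑ p, (σ p * v p j) * (G p i - u p i) := rfl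
      rw [this, ← Finset.sum_add_distrib]
      exact Finset.sum_congr rfl (fun p _ => by ring)
    have h3 : (∑ p, σ p * G p i * v p j)
        = ∑ p : Fin k, (if (p:ℕ) < ℓ then σ p • Matrix.vecMulVec (u p) (v p) else 0) i j := by
      refine Finset.sum_congr rfl (fun p _ => ?_)
      by_cases hp : (p:ℕ) < ℓ
      · rw [hGlt p hp i]
        rw [if_pos hp]
        simp [Matrix.vecMulVec_apply, mul_assoc]
      · rw [hGge p hp i, if_neg hp]
        simp
    have h4 : (∑ p : Fin k, (if (p:ℕ) < ℓ then σ p • Matrix.vecMulVec (u p) (v p) else 0)) i j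
        = ∑ p : Fin k, (if (p:ℕ) < ℓ then σ p • Matrix.vecMulVec (u p) (v p) else 0) i j := by
      rw [Matrix.sum_apply]
    show M i j = _
    rw [h1, h2, h3, ← h4]

/-- The truncated SVD attains the tail value. -/
lemma EY_attain {m n k : ℕ} (σ : Fin k → ℝ)
    (u : Fin k → Fin m → ℝ) (v : Fin k → Fin n → ℝ)
    (hu : ∀ i j : Fin k, (∑ t, u i t * u j t) = if i = j then (1 : ℝ) else 0)
    (hv : ∀ i j : Fin k, (∑ t, v i t * v j t) = if i = j then (1 : ℝ) else 0)
    (ℓ : ℕ) :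
    frobSq ((∑ i : Fin k, if (i:ℕ) < ℓ then σ i • Matrix.vecMulVec (u i) (v i) else 0)
        - ∑ i : Fin k, σ i • Matrix.vecMulVec (u i) (v i))
      = ∑ i : Fin k, if ℓ ≤ (i:ℕ) then σ i ^ 2 else 0 := by
  classical
  set b : Fin k → ℝ := fun p => (if (p:ℕ) < ℓ then σ p else 0) - σ p with hb
  have hent : ∀ i j, ((∑ i : Fin k, if (i:ℕ) < ℓ then σ i • Matrix.vecMulVec (u i) (v i) else 0)
      - ∑ i : Fin k, σ i • Matrix.vecMulVec (u i) (v i)) i j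
      = ∑ p, (b p * u p i) * v p j := by
    intro i j
    simp only [Matrix.sub_apply, Matrix.sum_apply]
    rw [← Finset.sum_sub_distrib]
    refine Finset.sum_congr rfl (fun p _ => ?_)
    simp only [hb]
    by_cases hp : (p:ℕ) < ℓ
    · simp only [if_pos hp, Matrix.smul_apply, Matrix.vecMulVec_apply, smul_eq_mul]
      ring
    · simp only [if_neg hp, Matrix.smul_apply, Matrix.vecMulVec_apply, smul_eq_mul,
        Matrix.zero_apply]
      ring
  unfold frobSq
  rw [Finset.sum_congr rfl (fun i _ => Finset.sum_congr rfl (fun j _ => by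
    rw [hent i j, sq]))]
  rw [frob_dot (fun p i => b p * u p i) (fun p j => v p j)
    (fun p i => b p * u p i) (fun p j => v p j)]
  have h2 : ∀ p q : Fin k, (∑ i, (b p * u p i) * (b q * u q i)) * (∑ j, v p j * v q j)
      = ((b p * b q) * (if p = q then (1:ℝ) else 0)) * (if p = q then (1:ℝ) else 0) := by
    intro p q
    rw [hv p q]
    congr 1
    rw [← hu p q, Finset.mul_sum]
    exact Finset.sum_congr rfl (fun i _ => by ring)
  have h3 : ∀ p q : Fin k, ((b p * b q) * (if p = q then (1:ℝ) else 0))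
      * (if p = q then (1:ℝ) else 0)
      = ((b p * b q) * (if p = q then (1:ℝ) else 0)) := by
    intro p q
    by_cases hpq : p = q
    · rw [if_pos hpq]; ring
    · rw [if_neg hpq]; ring
  rw [Finset.sum_congr rfl (fun p _ => Finset.sum_congr rfl (fun q _ => by rw [h2, h3]))]
  have h4 : (∑ p : Fin k, ∑ q : Fin k, (fun p q => b p * b q) p q * (if p = q then (1:ℝ) else 0))
      = ∑ p, b p * b p := sum_ite_diag (fun p q => b p * b q)
  rw [h4]
  refine Finset.sum_congr rfl (fun p _ => ?_)
  simp only [hb]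
  by_cases hp : (p:ℕ) < ℓ
  · rw [if_pos hp, if_neg (by omega)]; ring
  · rw [if_neg hp, if_pos (by omega)]; ring

/-- Scaling characterization of equal rank-one products. -/
lemma outer_scale {m n : ℕ} (x : Fin m → ℝ) (y : Fin n → ℝ) (s : ℝ) (hs : 0 < s)
    (u0 : Fin m → ℝ) (v0 : Fin n → ℝ) (hu0 : ∃ i, u0 i ≠ 0) (hv0 : ∃ j, v0 j ≠ 0)
    (h : ∀ i j, x i * y j = s * (u0 i * v0 j)) :
    ∃ c : ℝ, c ≠ 0 ∧ x = c • u0 ∧ y = (s / c) • v0 := by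
  obtain ⟨i0, hi0⟩ := hu0
  obtain ⟨j0, hj0⟩ := hv0
  have h00 : x i0 * y j0 = s * (u0 i0 * v0 j0) := h i0 j0
  have hne : x i0 * y j0 ≠ 0 := by
    rw [h00]
    exact mul_ne_zero (ne_of_gt hs) (mul_ne_zero hi0 hj0)
  have hxi0 : x i0 ≠ 0 := fun hc => hne (by rw [hc, zero_mul])
  have hyj0 : y j0 ≠ 0 := fun hc => hne (by rw [hc, mul_zero])
  refine ⟨x i0 / u0 i0, div_ne_zero hxi0 hi0, ?_, ?_⟩
  · funext i
    simp only [Pi.smul_apply, smul_eq_mul]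
    have h3 : (x i * u0 i0) * y j0 = (x i0 * u0 i) * y j0 := by
      linear_combination u0 i0 * h i j0 - u0 i * h i0 j0
    have key : x i * u0 i0 = x i0 * u0 i := mul_right_cancel₀ hyj0 h3
    field_simp
    linarith [key]
  · funext j
    simp only [Pi.smul_apply, smul_eq_mul]
    rw [div_div_eq_mul_div, div_mul_eq_mul_div, eq_div_iff hxi0]
    linear_combination h i0 j

/-- Sum over `Fin k` of an indicator at value `c`. -/
lemma sum_ite_val {k : ℕ} (g : Fin k → ℝ) (c : ℕ) :
    (∑ p : Fin k, if (p:ℕ) = c then g p else 0) = if h : c < k then g ⟨c, h⟩ else 0 := by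
  classical
  by_cases h : c < k
  · rw [dif_pos h]
    rw [Finset.sum_eq_single (⟨c, h⟩ : Fin k)]
    · rw [if_pos rfl]
    · intro p _ hp
      rw [if_neg (fun hc => hp (Fin.ext hc))]
    · intro hc; exact absurd (Finset.mem_univ _) hc
  · rw [dif_neg h]
    apply Finset.sum_eq_zero
    intro p _
    rw [if_neg (by have := p.isLt; omega)]

/-- Step formula for `lrProd`. -/
lemma lr_step {m n r : ℕ} (b : Fin r) (U : Matrix (Fin m) (Fin r) ℝ)
    (V : Matrix (Fin n) (Fin r) ℝ) (i : Fin m) (j : Fin n) :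
    lrProd ((b:ℕ)+1) U V i j = lrProd (b:ℕ) U V i j + U i b * V j b := by
  classical
  show (∑ t : Fin r, if (t:ℕ) < (b:ℕ)+1 then U i t * V j t else 0)
      = (∑ t : Fin r, if (t:ℕ) < (b:ℕ) then U i t * V j t else 0) + U i b * V j b
  have h1 : ∀ t : Fin r, (if (t:ℕ) < (b:ℕ)+1 then U i t * V j t else 0)
      = (if (t:ℕ) < (b:ℕ) then U i t * V j t else 0) + (if t = b then U i t * V j t else 0) := by
    intro t
    rcases lt_trichotomy ((t:ℕ)) ((b:ℕ)) with h | h | h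
    · rw [if_pos (by omega), if_pos h, if_neg (fun hc => by rw [hc] at h; omega)]
      ring
    · have : t = b := Fin.ext h
      rw [if_pos (by omega), if_neg (by omega), if_pos this]
      ring
    · rw [if_neg (by omega), if_neg (by omega), if_neg (fun hc => by rw [hc] at h; omega)]
      ring
  rw [Finset.sum_congr rfl (fun t _ => h1 t), Finset.sum_add_distrib,
    Finset.sum_ite_eq' Finset.univ b (fun t => U i t * V j t), if_pos (Finset.mem_univ b)]

/-- Entries of a truncated sum of rank-one matrices. -/
lemma T_ent {m n k : ℕ} (σ : Fin k → ℝ) (u : Fin k → Fin m → ℝ) (v : Fin k → Fin n → ℝ)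
    (ℓ : ℕ) (i : Fin m) (j : Fin n) :
    (∑ p : Fin k, if (p:ℕ) < ℓ then σ p • Matrix.vecMulVec (u p) (v p) else 0) i j
      = ∑ p : Fin k, if (p:ℕ) < ℓ then σ p * (u p i * v p j) else 0 := by
  rw [Matrix.sum_apply]
  refine Finset.sum_congr rfl (fun p _ => ?_)
  by_cases hp : (p:ℕ) < ℓ
  · rw [if_pos hp, if_pos hp]
    simp [Matrix.smul_apply, Matrix.vecMulVec_apply, smul_eq_mul]
  · rw [if_neg hp, if_neg hp]
    simp

/-- `lrProd` is the truncated SVD when the columns factor through the singular vectors. -/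
lemma lr_to_T {m n k r : ℕ} (hk : k ≤ r) (σ : Fin k → ℝ)
    (u : Fin k → Fin m → ℝ) (v : Fin k → Fin n → ℝ)
    (U : Matrix (Fin m) (Fin r) ℝ) (V : Matrix (Fin n) (Fin r) ℝ)
    (hent : ∀ (i : Fin m) (j : Fin n) (t : Fin r), U i t * V j t
      = (if h : (t:ℕ) < k then σ ⟨(t:ℕ), h⟩ * (u ⟨(t:ℕ), h⟩ i * v ⟨(t:ℕ), h⟩ j) else 0))
    (ℓ : ℕ) :
    lrProd ℓ U V = ∑ p : Fin k, if (p:ℕ) < ℓ then σ p • Matrix.vecMulVec (u p) (v p) else 0 := by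
  classical
  funext i j
  show (∑ t : Fin r, if (t:ℕ) < ℓ then U i t * V j t else 0) = _
  rw [T_ent]
  have h1 : ∀ t : Fin r, (if (t:ℕ) < ℓ then U i t * V j t else 0)
      = (if (t:ℕ) < ℓ then
          (if h : (t:ℕ) < k then σ ⟨(t:ℕ), h⟩ * (u ⟨(t:ℕ), h⟩ i * v ⟨(t:ℕ), h⟩ j) else 0)
        else 0) := by
    intro t
    by_cases ht : (t:ℕ) < ℓ
    · rw [if_pos ht, if_pos ht, hent i j t]
    · rw [if_neg ht, if_neg ht]
  rw [Finset.sum_congr rfl (fun t _ => h1 t)]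
  rw [sum_fin_lt hk _ (by
    intro t ht
    rw [dif_neg ht, ite_self])]
  refine Finset.sum_congr rfl (fun p _ => ?_)
  have h2 : ((Fin.castLE hk p : Fin r) : ℕ) = (p:ℕ) := rfl
  by_cases hp : (p:ℕ) < ℓ
  · rw [if_pos (by rw [h2]; exact hp), if_pos hp, dif_pos (by rw [h2]; exact p.isLt)]
    congr 1 <;> congr 1 <;> exact Fin.ext rfl
  · rw [if_neg (by rw [h2]; exact hp), if_neg hp]

/-- For `A` of rank `k` with distinct positive singular values
`σ₁ > … > σ_k > 0` and SVD `A = ∑_{i=1}^k σ_i ũ_i ṽ_iᵀ`, the objective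
`Φ(U,V) = (1/r) ∑_{b=1}^r ‖U_{:b}V_{:b}ᵀ − A‖_F²` (with `r = min m n`) has minimum
value `(1/r) ∑_{b=1}^r ∑_{i=b+1}^k σ_i²`; `(U,V)` is a global minimizer iff
`U_{:b}V_{:b}ᵀ = ∑_{i=1}^{min(b,k)} σ_i ũ_i ṽ_iᵀ` for every `b ∈ {1,…,r}`;
equivalently, iff for each `i ≤ k` there is `c_i ≠ 0` with `u_i = c_i ũ_i` and
`v_i = (σ_i/c_i) ṽ_i`, and `u_i v_iᵀ = 0` for each `i > k`. -/
theorem stmt6 {m n k : ℕ} (A : Matrix (Fin m) (Fin n) ℝ) (hk : k ≤ min m n)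
    (σ : Fin k → ℝ) (hσpos : ∀ i, 0 < σ i)
    (hσstrict : ∀ i j : Fin k, i < j → σ j < σ i)
    (u : Fin k → Fin m → ℝ) (v : Fin k → Fin n → ℝ)
    (hu : ∀ i j : Fin k, (∑ t, u i t * u j t) = if i = j then (1 : ℝ) else 0)
    (hv : ∀ i j : Fin k, (∑ t, v i t * v j t) = if i = j then (1 : ℝ) else 0)
    (hA : A = ∑ i : Fin k, σ i • Matrix.vecMulVec (u i) (v i))
    (hrank : A.rank = k) :
    -- the minimum of Φ equals (1/r) ∑_{b=1}^r ∑_{i=b+1}^k σ_i²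
    IsLeast {y : ℝ | ∃ (U : Matrix (Fin m) (Fin (min m n)) ℝ)
        (V : Matrix (Fin n) (Fin (min m n)) ℝ), nestedFrobObj A U V = y}
      ((1 / (min m n : ℝ)) * ∑ b : Fin (min m n),
        ∑ i : Fin k, if (b : ℕ) + 1 ≤ (i : ℕ) then σ i ^ 2 else 0) ∧
    -- minimizer ↔ all nested truncations equal the truncated SVDs
    (∀ (U : Matrix (Fin m) (Fin (min m n)) ℝ) (V : Matrix (Fin n) (Fin (min m n)) ℝ),
      (∀ (U' : Matrix (Fin m) (Fin (min m n)) ℝ) (V' : Matrix (Fin n) (Fin (min m n)) ℝ),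
          nestedFrobObj A U V ≤ nestedFrobObj A U' V') ↔
      (∀ b : Fin (min m n), lrProd ((b : ℕ) + 1) U V =
        ∑ i : Fin k, if (i : ℕ) < (b : ℕ) + 1 then σ i • Matrix.vecMulVec (u i) (v i)
          else 0)) ∧
    -- minimizer ↔ column-scaling characterization
    (∀ (U : Matrix (Fin m) (Fin (min m n)) ℝ) (V : Matrix (Fin n) (Fin (min m n)) ℝ),
      (∀ (U' : Matrix (Fin m) (Fin (min m n)) ℝ) (V' : Matrix (Fin n) (Fin (min m n)) ℝ),
          nestedFrobObj A U V ≤ nestedFrobObj A U' V') ↔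
      ((∀ i : Fin k, ∃ c : ℝ, c ≠ 0 ∧
          (fun t => U t (Fin.castLE hk i)) = c • u i ∧
          (fun t => V t (Fin.castLE hk i)) = (σ i / c) • v i) ∧
        (∀ i : Fin (min m n), k ≤ (i : ℕ) →
          Matrix.vecMulVec (fun t => U t i) (fun t => V t i) = 0))) := by
  classical
  -- notation
  have hEY := fun (ℓ : ℕ) (U : Matrix (Fin m) (Fin (min m n)) ℝ)
    (V : Matrix (Fin n) (Fin (min m n)) ℝ) => EY σ hσpos hσstrict u v hu hv ℓ U V
  have hEY1 : ∀ (ℓ : ℕ) (U : Matrix (Fin m) (Fin (min m n)) ℝ)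
      (V : Matrix (Fin n) (Fin (min m n)) ℝ),
      (∑ i : Fin k, if ℓ ≤ (i:ℕ) then σ i ^ 2 else 0)
      ≤ frobSq (lrProd ℓ U V - A) := by
    intro ℓ U V; rw [hA]; exact (hEY ℓ U V).1
  have hEY2 : ∀ (ℓ : ℕ) (U : Matrix (Fin m) (Fin (min m n)) ℝ)
      (V : Matrix (Fin n) (Fin (min m n)) ℝ), frobSq (lrProd ℓ U V - A)
        = (∑ i : Fin k, if ℓ ≤ (i:ℕ) then σ i ^ 2 else 0) →
      lrProd ℓ U V = ∑ i : Fin k, if (i:ℕ) < ℓ then σ i • Matrix.vecMulVec (u i) (v i) else 0 := by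
    intro ℓ U V; rw [hA]; exact (hEY ℓ U V).2
  have hatt : ∀ ℓ : ℕ,
      frobSq ((∑ i : Fin k, if (i:ℕ) < ℓ then σ i • Matrix.vecMulVec (u i) (v i) else 0) - A)
        = ∑ i : Fin k, if ℓ ≤ (i:ℕ) then σ i ^ 2 else 0 := by
    intro ℓ; rw [hA]; exact EY_attain σ u v hu hv ℓ
  -- canonical factors
  set U₀ : Matrix (Fin m) (Fin (min m n)) ℝ :=
    Matrix.of (fun i t => if h : (t:ℕ) < k then u ⟨(t:ℕ), h⟩ i else 0) with hU₀def
  set V₀ : Matrix (Fin n) (Fin (min m n)) ℝ :=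
    Matrix.of (fun j t => if h : (t:ℕ) < k then σ ⟨(t:ℕ), h⟩ * v ⟨(t:ℕ), h⟩ j else 0) with hV₀def
  have hU₀ : ∀ ℓ : ℕ, lrProd ℓ U₀ V₀
      = ∑ p : Fin k, if (p:ℕ) < ℓ then σ p • Matrix.vecMulVec (u p) (v p) else 0 := by
    intro ℓ
    apply lr_to_T hk σ u v
    intro i j t
    by_cases h : (t:ℕ) < k
    · rw [dif_pos h]
      show (if h : (t:ℕ) < k then u ⟨(t:ℕ), h⟩ i else 0)
          * (if h : (t:ℕ) < k then σ ⟨(t:ℕ), h⟩ * v ⟨(t:ℕ), h⟩ j else 0) = _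
      rw [dif_pos h, dif_pos h]; ring
    · rw [dif_neg h]
      show (if h : (t:ℕ) < k then u ⟨(t:ℕ), h⟩ i else 0)
          * (if h : (t:ℕ) < k then σ ⟨(t:ℕ), h⟩ * v ⟨(t:ℕ), h⟩ j else 0) = 0
      rw [dif_neg h, zero_mul]
  have hΦ₀ : nestedFrobObj A U₀ V₀
      = (1 / (min m n : ℝ)) * ∑ b : Fin (min m n),
          ∑ i : Fin k, if (b : ℕ) + 1 ≤ (i : ℕ) then σ i ^ 2 else 0 := by
    unfold nestedFrobObj
    congr 1
    refine Finset.sum_congr rfl (fun b _ => ?_)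
    rw [hU₀ ((b:ℕ)+1), hatt ((b:ℕ)+1)]
  have hLB : ∀ (U : Matrix (Fin m) (Fin (min m n)) ℝ)
      (V : Matrix (Fin n) (Fin (min m n)) ℝ), (1 / (min m n : ℝ)) * (∑ b : Fin (min m n),
      ∑ i : Fin k, if (b : ℕ) + 1 ≤ (i : ℕ) then σ i ^ 2 else 0) ≤ nestedFrobObj A U V := by
    intro U V
    unfold nestedFrobObj
    apply mul_le_mul_of_nonneg_left _ (by positivity)
    exact Finset.sum_le_sum (fun b _ => hEY1 ((b:ℕ)+1) U V)
  -- characterization of minimizers via truncations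
  have hchar : ∀ (U : Matrix (Fin m) (Fin (min m n)) ℝ)
      (V : Matrix (Fin n) (Fin (min m n)) ℝ),
      (∀ (U' : Matrix (Fin m) (Fin (min m n)) ℝ) (V' : Matrix (Fin n) (Fin (min m n)) ℝ),
          nestedFrobObj A U V ≤ nestedFrobObj A U' V') ↔
      (∀ b : Fin (min m n), lrProd ((b : ℕ) + 1) U V =
        ∑ i : Fin k, if (i : ℕ) < (b : ℕ) + 1 then σ i • Matrix.vecMulVec (u i) (v i) else 0) := by
    intro U V
    constructor
    · intro hmin
      rcases Nat.eq_zero_or_pos (min m n) with h0 | h0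
      · intro b
        exact absurd b.isLt (by omega)
      · have h1 : nestedFrobObj A U V
            = (1 / (min m n : ℝ)) * ∑ b : Fin (min m n),
                ∑ i : Fin k, if (b : ℕ) + 1 ≤ (i : ℕ) then σ i ^ 2 else 0 :=
          le_antisymm (hΦ₀ ▸ hmin U₀ V₀) (hLB U V)
        have hrne : (1 / (min m n : ℝ)) ≠ 0 := by
          have : (0:ℝ) < (min m n : ℝ) := by exact_mod_cast h0
          positivity
        have h2 : (∑ b : Fin (min m n), frobSq (lrProd ((b:ℕ)+1) U V - A))
            = ∑ b : Fin (min m n),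
                ∑ i : Fin k, if (b : ℕ) + 1 ≤ (i : ℕ) then σ i ^ 2 else 0 := by
          have := h1
          unfold nestedFrobObj at this
          exact mul_left_cancel₀ hrne this
        have h3 := (Finset.sum_eq_sum_iff_of_le
          (fun (b : Fin (min m n)) (_ : b ∈ Finset.univ) => hEY1 ((b:ℕ)+1) U V)).1 h2.symm
        intro b
        exact hEY2 ((b:ℕ)+1) U V (h3 b (Finset.mem_univ b)).symm
    · intro htr U' V'
      have h1 : nestedFrobObj A U V
          = (1 / (min m n : ℝ)) * ∑ b : Fin (min m n),
              ∑ i : Fin k, if (b : ℕ) + 1 ≤ (i : ℕ) then σ i ^ 2 else 0 := by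
        unfold nestedFrobObj
        congr 1
        refine Finset.sum_congr rfl (fun b _ => ?_)
        rw [htr b, hatt ((b:ℕ)+1)]
      rw [h1]
      exact hLB U' V'
  -- truncations ↔ column scaling
  have hcols : ∀ (U : Matrix (Fin m) (Fin (min m n)) ℝ)
      (V : Matrix (Fin n) (Fin (min m n)) ℝ),
      (∀ b : Fin (min m n), lrProd ((b : ℕ) + 1) U V =
        ∑ i : Fin k, if (i : ℕ) < (b : ℕ) + 1 then σ i • Matrix.vecMulVec (u i) (v i) else 0) ↔
      ((∀ i : Fin k, ∃ c : ℝ, c ≠ 0 ∧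
          (fun t => U t (Fin.castLE hk i)) = c • u i ∧
          (fun t => V t (Fin.castLE hk i)) = (σ i / c) • v i) ∧
        (∀ i : Fin (min m n), k ≤ (i : ℕ) →
          Matrix.vecMulVec (fun t => U t i) (fun t => V t i) = 0)) := by
    intro U V
    constructor
    · intro htr
      have hlev : ∀ ℓ : ℕ, ℓ ≤ min m n → lrProd ℓ U V
          = ∑ p : Fin k, if (p:ℕ) < ℓ then σ p • Matrix.vecMulVec (u p) (v p) else 0 := by
        intro ℓ hℓ
        cases ℓ with
        | zero =>
          funext i j
          show (∑ t : Fin (min m n), if (t:ℕ) < 0 then U i t * V j t else 0) = _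
          rw [T_ent σ u v 0 i j, Finset.sum_eq_zero (fun t _ => if_neg (by omega)),
            Finset.sum_eq_zero (fun p _ => if_neg (by omega))]
        | succ c =>
          have hb := htr ⟨c, by omega⟩
          exact hb
      have hcol : ∀ (b : Fin (min m n)) (i : Fin m) (j : Fin n), U i b * V j b
          = (if h : (b:ℕ) < k then σ ⟨(b:ℕ), h⟩ * (u ⟨(b:ℕ), h⟩ i * v ⟨(b:ℕ), h⟩ j) else 0) := by
        intro b i j
        have h1 := lr_step b U V i j
        rw [hlev ((b:ℕ)+1) (by omega), hlev (b:ℕ) (le_of_lt b.isLt)] at h1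
        rw [T_ent σ u v ((b:ℕ)+1) i j, T_ent σ u v (b:ℕ) i j] at h1
        have h2 : U i b * V j b
            = (∑ p : Fin k, if (p:ℕ) < (b:ℕ)+1 then σ p * (u p i * v p j) else 0)
              - ∑ p : Fin k, if (p:ℕ) < (b:ℕ) then σ p * (u p i * v p j) else 0 := by
          linarith [h1]
        rw [h2, ← Finset.sum_sub_distrib]
        have h3 : ∀ p : Fin k, (if (p:ℕ) < (b:ℕ)+1 then σ p * (u p i * v p j) else 0)
            - (if (p:ℕ) < (b:ℕ) then σ p * (u p i * v p j) else 0)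
            = (if (p:ℕ) = (b:ℕ) then σ p * (u p i * v p j) else 0) := by
          intro p
          rcases lt_trichotomy ((p:ℕ)) ((b:ℕ)) with h | h | h
          · rw [if_pos (by omega), if_pos h, if_neg (by omega)]; ring
          · rw [if_pos (by omega), if_neg (by omega), if_pos h]; ring
          · rw [if_neg (by omega), if_neg (by omega), if_neg (by omega)]; ring
        rw [Finset.sum_congr rfl (fun p _ => h3 p), sum_ite_val]
      constructor
      · intro i
        have hb : ((Fin.castLE hk i : Fin (min m n)) : ℕ) = (i:ℕ) := rfl
        have h2 : ∀ (x : Fin m) (y : Fin n),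
            U x (Fin.castLE hk i) * V y (Fin.castLE hk i) = σ i * (u i x * v i y) := by
          intro x y
          rw [hcol (Fin.castLE hk i) x y,
            dif_pos (show ((Fin.castLE hk i : Fin (min m n)) : ℕ) < k from i.isLt)]
          have h4 : (⟨((Fin.castLE hk i : Fin (min m n)) : ℕ), i.isLt⟩ : Fin k) = i :=
            Fin.ext rfl
          rw [h4]
        have hune : ∃ x, u i x ≠ 0 := by
          by_contra hc
          push_neg at hc
          have h5 := hu i i
          rw [if_pos rfl, Finset.sum_eq_zero (fun x _ => by rw [hc x, zero_mul])] at h5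
          exact one_ne_zero h5.symm
        have hvne : ∃ y, v i y ≠ 0 := by
          by_contra hc
          push_neg at hc
          have h5 := hv i i
          rw [if_pos rfl, Finset.sum_eq_zero (fun x _ => by rw [hc x, zero_mul])] at h5
          exact one_ne_zero h5.symm
        exact outer_scale (fun x => U x (Fin.castLE hk i)) (fun y => V y (Fin.castLE hk i))
          (σ i) (hσpos i) (u i) (v i) hune hvne h2
      · intro i hik
        funext x y
        show (fun t => U t i) x * (fun t => V t i) y = (0 : Matrix (Fin m) (Fin n) ℝ) x y
        rw [hcol i x y, dif_neg (by omega)]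
        rfl
    · rintro ⟨h1, h2⟩ b
      apply lr_to_T hk σ u v
      intro i j t
      by_cases h : (t:ℕ) < k
      · rw [dif_pos h]
        have hpt : Fin.castLE hk (⟨(t:ℕ), h⟩ : Fin k) = t := Fin.ext rfl
        obtain ⟨c, hc, hx, hy⟩ := h1 ⟨(t:ℕ), h⟩
        have hUx := congrFun hx i
        have hVy := congrFun hy j
        rw [hpt] at hUx hVy
        simp only [Pi.smul_apply, smul_eq_mul] at hUx hVy
        rw [hUx, hVy]
        field_simp
      · have h3 := h2 t (by omega)
        have h4 : Matrix.vecMulVec (fun s => U s t) (fun s => V s t) i j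
            = (0 : Matrix (Fin m) (Fin n) ℝ) i j := by rw [h3]
        rw [Matrix.vecMulVec_apply] at h4
        rw [dif_neg h]
        exact h4
  refine ⟨⟨⟨U₀, V₀, hΦ₀⟩, ?_⟩, hchar, fun U V => (hchar U V).trans (hcols U V)⟩
  rintro y ⟨U, V, rfl⟩
  exact hLB U V

end
end
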